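/- arXiv:2404.03851 — 4 statements merged into one kernel-verified Lean document; each statement's English description precedes it below -/
import Mathlib

section
/- Let k_0, k_1 ≥ 0 be integers. A partition λ belongs to the CMPP set 𝒜_{k_0,k_1} if and only if f_1(λ) ≤ k_1 and f_i(λ) + f_{i+1}(λ) ≤ k_0 + k_1 for all i ≥ 1. In particular 𝒜_{k_0,k_1} equals Gordon's set B_{k_0+k_1, k_1} of partitions λ with f_1(λ) ≤ k_1 and f_i(λ)+f_{i+1}(λ) ≤ k_0+k_1 for all i ≥ 1. -/
/-- Characterisation of the rank-one CMPP set 𝒜_{k₀,k₁}.  For a partition `P`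
(a multiset of positive integers) with multiplicity function `f` extended by
`f 0 = k₀` and `f (-1) = k₁`, every path `(i₁, i₂)` (with `i₁ ≥ 0` even,
`i₂ ≥ -1` odd and `|i₁ - i₂| = 1`) has weight `f i₁ + f i₂ ≤ k₀ + k₁`
if and only if `f 1 ≤ k₁` and `f i + f (i+1) ≤ k₀ + k₁` for all `i ≥ 1`;
that is, 𝒜_{k₀,k₁} is Gordon's set `B_{k₀+k₁,k₁}`. -/
theorem rank_one_CMPP_eq_gordon (k₀ k₁ : ℕ) (P : Multiset ℕ) (hP : ∀ x ∈ P, 0 < x) :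
    (∀ i₁ i₂ : ℤ, 0 ≤ i₁ → Even i₁ → -1 ≤ i₂ → Odd i₂ → |i₁ - i₂| = 1 →
        (if i₁ = 0 then k₀ else P.count i₁.toNat) +
          (if i₂ = -1 then k₁ else P.count i₂.toNat) ≤ k₀ + k₁) ↔
      (P.count 1 ≤ k₁ ∧ ∀ i : ℕ, 1 ≤ i → P.count i + P.count (i + 1) ≤ k₀ + k₁) := by
  constructor
  · intro h
    constructor
    · have := h 0 1 le_rfl Even.zero (by norm_num) ⟨0, by ring⟩ (by norm_num)
      simpa using this
    · intro i hi
      rcases Nat.even_or_odd i with he | ho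
      · have hi2 : 2 ≤ i := by rcases he with ⟨m, hm⟩; omega
        have ha : (0:ℤ) ≤ (i:ℤ) := by positivity
        have hb : Even ((i:ℤ)) := by exact_mod_cast he
        have hc : (-1:ℤ) ≤ (i:ℤ) + 1 := by omega
        have hd : Odd ((i:ℤ) + 1) := by
          rcases he with ⟨m, hm⟩; exact ⟨(m : ℤ), by push_cast [hm]; ring⟩
        have hab : |(i:ℤ) - ((i:ℤ)+1)| = 1 := by simp
        have := h (i : ℤ) ((i : ℤ) + 1) ha hb hc hd hab
        have h0 : (i : ℤ) ≠ 0 := by omega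
        have h1 : (i : ℤ) + 1 ≠ -1 := by omega
        rw [if_neg h0, if_neg h1] at this
        have e1 : ((i : ℤ)).toNat = i := by omega
        have e2 : ((i : ℤ) + 1).toNat = i + 1 := by omega
        rwa [e1, e2] at this
      · have := h ((i : ℤ) + 1) (i : ℤ) (by positivity)
          (by rcases ho with ⟨m, hm⟩; exact ⟨(m : ℤ) + 1, by push_cast [hm]; ring⟩)
          (by omega)
          (by rcases ho with ⟨m, hm⟩; exact ⟨(m : ℤ), by push_cast [hm]; ring⟩)
          (by simp)
        have h0 : (i : ℤ) + 1 ≠ 0 := by omega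
        have h1 : (i : ℤ) ≠ -1 := by omega
        rw [if_neg h0, if_neg h1] at this
        have e1 : ((i : ℤ) + 1).toNat = i + 1 := by omega
        have e2 : ((i : ℤ)).toNat = i := by omega
        rw [e1, e2] at this
        omega
  · rintro ⟨h1, h2⟩ i₁ i₂ h0 he h1' ho habs
    have habs' : i₂ = i₁ + 1 ∨ i₂ = i₁ - 1 := by
      rcases abs_eq (by norm_num : (0:ℤ) ≤ 1) |>.mp habs with h | h <;> omega
    by_cases hz : i₁ = 0
    · subst hz
      rcases habs' with h | h
      · subst h
        rw [if_pos rfl, if_neg (by norm_num)]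
        simpa using Nat.add_le_add_left h1 k₀
      · subst h
        norm_num
    · have hi2 : 2 ≤ i₁ := by
        rcases he with ⟨m, hm⟩; omega
      rw [if_neg hz]
      rcases habs' with h | h
      · subst h
        rw [if_neg (by omega)]
        have := h2 i₁.toNat (by omega)
        have e : (i₁ + 1).toNat = i₁.toNat + 1 := by omega
        rw [e]
        exact this
      · subst h
        rw [if_neg (by omega)]
        have := h2 (i₁ - 1).toNat (by omega)
        have e : i₁.toNat = (i₁ - 1).toNat + 1 := by omega
        rw [e]
        omega
end

section
/- For all integers k, r, s ≥ 0 the identity Σ_{i=0}^{r} (−1)^i q^{i(i−1)/2 + (r−i)(r−i−1)/2 + (r+s+i)(r+s+i−1)/2} d_i · binom_q(i+s, s) · binom_q(k, r−i) · binom_q(k, r+s+i) = q^{r(r−1)/2 + (r+s)(r+s−1)/2} (q;q)_k / ((q;q)_{k−r−s} (q;q)_r (q;q)_s) holds as an identity of rational functions in the indeterminate q, where d_i := (1 − q^{2i+s})/(1 − q^{i+s}) for i + s > 0 and d_i := 1 when i = s = 0. -/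
noncomputable section

/-- `(q;q)_m = ∏_{i=0}^{m-1}(1 - q^{i+1})` as a rational function in `q`. -/
def qfac (m : ℕ) : RatFunc ℚ :=
  ∏ i ∈ Finset.range m, (1 - RatFunc.X ^ (i + 1))

/-- `1/(q;q)_m` with the convention that it is `0` for `m < 0`. -/
def qfacInv (m : ℤ) : RatFunc ℚ :=
  if m < 0 then 0 else (qfac m.toNat)⁻¹

/-- The Gaussian binomial coefficient `[m choose j]_q` as a rational function in `q`,
equal to `(q;q)_m/((q;q)_j (q;q)_{m-j})` for `0 ≤ j ≤ m` and `0` otherwise. -/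
def qbinom (m j : ℕ) : RatFunc ℚ :=
  if j ≤ m then qfac m / (qfac j * qfac (m - j)) else 0

/-!
Wilf–Zeilberger method in `k`. Both sides vanish for `k < r + s` and agree at `k = r + s`, where
only the term `i = 0` of the sum survives. Both satisfy
`(1 - q^(k+1-r-s)) F (k+1) = (1 - q^(k+1)) F k`: for the right-hand side this is
`(q;q)_(k+1) = (1 - q^(k+1)) (q;q)_k`, and for the sum each term of the recurrence is a difference
`G (i+1) - G i` of an explicit certificate vanishing at `i = 0` and `i = r + 1`, so the recurrence
telescopes.
-/

open RatFunc Finset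

theorem RatFunc.one_sub_X_pow_ne_zero {K : Type*} [Field K] {n : ℕ} (hn : n ≠ 0) :
    (1 : RatFunc K) - X ^ n ≠ 0 := by
  have h : (1 : RatFunc K) - X ^ n
      = algebraMap (Polynomial K) (RatFunc K) (-(Polynomial.X ^ n - Polynomial.C 1)) := by
    simp [RatFunc.algebraMap_X]
  rw [h, map_ne_zero_iff _ (RatFunc.algebraMap_injective K), neg_ne_zero]
  exact Polynomial.X_pow_sub_C_ne_zero (Nat.pos_of_ne_zero hn) 1

theorem qfac_zero : qfac 0 = 1 := prod_range_zero _

theorem qfac_succ (m : ℕ) : qfac (m + 1) = qfac m * (1 - X ^ (m + 1)) := prod_range_succ _ _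

theorem qfac_ne_zero (m : ℕ) : qfac m ≠ 0 :=
  prod_ne_zero_iff.2 fun i _ => one_sub_X_pow_ne_zero i.succ_ne_zero

theorem qfacInv_natCast (n : ℕ) : qfacInv n = (qfac n)⁻¹ := by
  rw [qfacInv, if_neg (by omega), Int.toNat_natCast]

theorem qfacInv_of_neg {m : ℤ} (h : m < 0) : qfacInv m = 0 := if_pos h

theorem qbinom_of_lt {m j : ℕ} (h : m < j) : qbinom m j = 0 := if_neg (by omega)

theorem qbinom_self (m : ℕ) : qbinom m m = 1 := by
  rw [qbinom, if_pos le_rfl, Nat.sub_self, qfac_zero, mul_one, div_self (qfac_ne_zero m)]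

theorem qbinom_mul_succ_eq (n k : ℕ) :
    qbinom n k * (1 - X ^ (n + 1)) = qbinom (n + 1) k * (1 - X ^ (n + 1 - k)) := by
  rcases le_or_gt k n with hk | hk
  · rw [qbinom, qbinom, if_pos hk, if_pos (by omega), Nat.succ_sub hk, qfac_succ, qfac_succ]
    have := qfac_ne_zero k
    have := qfac_ne_zero (n - k)
    have := one_sub_X_pow_ne_zero (K := ℚ) (n - k).succ_ne_zero
    field_simp
  · rw [qbinom_of_lt hk, Nat.sub_eq_zero_of_le hk, pow_zero, sub_self, zero_mul, mul_zero]

theorem qbinom_succ_right_eq (n k : ℕ) :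
    qbinom n (k + 1) * (1 - X ^ (k + 1)) = qbinom n k * (1 - X ^ (n - k)) := by
  rcases lt_or_ge k n with hk | hk
  · rw [qbinom, qbinom, if_pos (Nat.succ_le_of_lt hk), if_pos hk.le, qfac_succ,
      show n - k = n - (k + 1) + 1 by omega, qfac_succ]
    have := qfac_ne_zero k
    have := qfac_ne_zero (n - (k + 1))
    have := one_sub_X_pow_ne_zero (K := ℚ) k.succ_ne_zero
    have := one_sub_X_pow_ne_zero (K := ℚ) (n - (k + 1)).succ_ne_zero
    field_simp
  · rw [qbinom_of_lt (by omega : n < k + 1), Nat.sub_eq_zero_of_le hk, pow_zero, sub_self,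
      zero_mul, mul_zero]

namespace LassalleSchlosser

def exponent (r s i : ℕ) : ℕ :=
  i * (i - 1) / 2 + (r - i) * (r - i - 1) / 2 + (r + s + i) * (r + s + i - 1) / 2

theorem exponent_zero (r s : ℕ) :
    exponent r s 0 = r * (r - 1) / 2 + (r + s) * (r + s - 1) / 2 := by
  simp [exponent]

theorem exponent_succ {r s i : ℕ} (hi : i < r) :
    exponent r s (i + 1) = exponent r s i + (3 * i + 1 + s) := by
  obtain ⟨j, rfl⟩ : ∃ j, r = i + j + 1 := ⟨r - i - 1, by omega⟩
  simp only [exponent]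
  rw [show i + j + 1 - (i + 1) = j by omega, show i + j + 1 - i = j + 1 by omega,
    show i + j + 1 + s + (i + 1) = i + j + 1 + s + i + 1 by omega, Nat.triangle_succ,
    Nat.triangle_succ, Nat.triangle_succ]
  omega

def weight (s i : ℕ) : RatFunc ℚ :=
  if i + s = 0 then 1 else (1 - X ^ (2 * i + s)) / (1 - X ^ (i + s))

def core (k r s i : ℕ) : RatFunc ℚ :=
  (-1) ^ i * X ^ exponent r s i * qbinom (i + s) s * qbinom k (r - i) * qbinom k (r + s + i)

def summand (k r s i : ℕ) : RatFunc ℚ := weight s i * core k r s i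

def lhs (k r s : ℕ) : RatFunc ℚ := ∑ i ∈ range (r + 1), summand k r s i

def wzCert (k r s i : ℕ) : RatFunc ℚ :=
  -((-1) ^ i * X ^ (exponent r s i + (k - (r + s + i))) * (1 - X ^ i) * (1 - X ^ (r + s + i))
    * (1 - X ^ (r + 1 - i)) * qbinom (i + s) s * qbinom k (r + 1 - i) * qbinom k (r + s + i)
    / (1 - X ^ (i + s)))

theorem weight_zero (s : ℕ) : weight s 0 = 1 := by
  rcases eq_or_ne s 0 with rfl | hs
  · simp [weight]
  · rw [weight, if_neg (by omega), mul_zero, zero_add, div_self (one_sub_X_pow_ne_zero hs)]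

theorem wzCert_zero (k r s : ℕ) : wzCert k r s 0 = 0 := by
  simp [wzCert]

theorem wzCert_succ_self (k r s : ℕ) : wzCert k r s (r + 1) = 0 := by
  simp [wzCert]

theorem one_sub_X_pow_sq_mul_summand (n r s i : ℕ) :
    (1 - X ^ (n + 1)) ^ 2 * summand n r s i
      = (1 - X ^ (n + 1 - (r - i))) * (1 - X ^ (n + 1 - (r + s + i))) * summand (n + 1) r s i := by
  simp only [summand, core]
  calc _ = weight s i * (-1) ^ i * X ^ exponent r s i * qbinom (i + s) s
          * (qbinom n (r - i) * (1 - X ^ (n + 1)))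
          * (qbinom n (r + s + i) * (1 - X ^ (n + 1))) := by
        ring
    _ = _ := by rw [qbinom_mul_succ_eq, qbinom_mul_succ_eq]; ring

theorem wzCert_eq {k r s i : ℕ} (hi : i ≤ r) :
    wzCert k r s i = -(X ^ (k - (r + s + i)) * (1 - X ^ i) * (1 - X ^ (r + s + i))
      * (1 - X ^ (k - (r - i))) * core k r s i / (1 - X ^ (i + s))) := by
  have h := qbinom_succ_right_eq k (r - i)
  rw [← Nat.sub_add_comm hi] at h
  simp only [wzCert, core, pow_add]
  calc _ = -((-1) ^ i * X ^ exponent r s i * X ^ (k - (r + s + i)) * (1 - X ^ i)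
          * (1 - X ^ (r + s + i)) * qbinom (i + s) s * qbinom k (r + s + i)
          * (qbinom k (r + 1 - i) * (1 - X ^ (r + 1 - i))) / (1 - X ^ (i + s))) := by
        ring
    _ = _ := by rw [h]; ring

theorem wzCert_succ {k r s i : ℕ} (hi : i ≤ r) (hk : r + s + i ≤ k) :
    wzCert k r s (i + 1) = X ^ (3 * i + s) * X ^ (k - (r + s + i)) * (1 - X ^ (r - i))
      * (1 - X ^ (k - (r + s + i))) * core k r s i := by
  rcases hi.eq_or_lt with rfl | hi
  · simp [wzCert_succ_self]
  rcases hk.eq_or_lt with rfl | hk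
  · simp [wzCert, qbinom_of_lt (show r + s + i < r + s + (i + 1) by omega)]
  have hs := qbinom_mul_succ_eq (i + s) s
  have hk' := qbinom_succ_right_eq k (r + s + i)
  rw [show i + s + 1 - s = i + 1 by omega] at hs
  have hne := one_sub_X_pow_ne_zero (K := ℚ) (i + s).succ_ne_zero
  rw [wzCert, exponent_succ hi, show r + 1 - (i + 1) = r - i by omega,
    show i + 1 + s = i + s + 1 by omega, show r + s + (i + 1) = r + s + i + 1 by omega,
    show exponent r s i + (3 * i + 1 + s) + (k - (r + s + i + 1))
      = exponent r s i + (3 * i + s) + (k - (r + s + i)) by omega]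
  calc _ = (-1) ^ i * X ^ exponent r s i * X ^ (3 * i + s) * X ^ (k - (r + s + i))
          * (1 - X ^ (r - i)) * qbinom k (r - i) * (qbinom (i + s + 1) s * (1 - X ^ (i + 1)))
          * (qbinom k (r + s + i + 1) * (1 - X ^ (r + s + i + 1))) / (1 - X ^ (i + s + 1)) := by
        ring
    _ = _ := by
        rw [← hs, hk']
        field_simp
        simp only [core]
        ring

theorem summand_telescope {n r s i : ℕ} (hi : i ≤ r) :
    (1 - X ^ (n + 1)) * ((1 - X ^ (n + 1 - (r + s))) * summand (n + 1) r s i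
      - (1 - X ^ (n + 1)) * summand n r s i)
      = wzCert (n + 1) r s (i + 1) - wzCert (n + 1) r s i := by
  rcases lt_or_ge (n + 1) (r + s + i) with hn | hn
  · simp [summand, core, wzCert, qbinom_of_lt hn, qbinom_of_lt (show n < r + s + i by omega),
      qbinom_of_lt (show n + 1 < r + s + (i + 1) by omega)]
  rw [mul_sub, ← mul_assoc, ← mul_assoc, ← sq, one_sub_X_pow_sq_mul_summand,
    wzCert_succ hi hn, wzCert_eq hi, summand]
  have hK : (X : RatFunc ℚ) ^ (n + 1)
      = X ^ (n + 1 - (r + s + i)) * X ^ (r - i) * X ^ s * (X ^ i) ^ 2 := by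
    rw [← pow_mul, ← pow_add, ← pow_add, ← pow_add]; congr 1; omega
  have hKrs : (X : RatFunc ℚ) ^ (n + 1 - (r + s)) = X ^ (n + 1 - (r + s + i)) * X ^ i := by
    rw [← pow_add]; congr 1; omega
  have hKr : (X : RatFunc ℚ) ^ (n + 1 - (r - i))
      = X ^ (n + 1 - (r + s + i)) * X ^ s * (X ^ i) ^ 2 := by
    rw [← pow_mul, ← pow_add, ← pow_add]; congr 1; omega
  have hrsi : (X : RatFunc ℚ) ^ (r + s + i) = X ^ (r - i) * X ^ s * (X ^ i) ^ 2 := by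
    rw [← pow_mul, ← pow_add, ← pow_add]; congr 1; omega
  rw [hK, hKrs, hKr, hrsi, show (X : RatFunc ℚ) ^ (3 * i + s) = (X ^ i) ^ 3 * X ^ s by ring]
  rcases eq_or_ne (i + s) 0 with his | his
  · obtain ⟨rfl, rfl⟩ : i = 0 ∧ s = 0 := by omega
    simp only [weight_zero, pow_zero, mul_one, sub_self]
    ring
  rw [weight, if_neg his, show (X : RatFunc ℚ) ^ (2 * i + s) = (X ^ i) ^ 2 * X ^ s by ring]
  have hne := one_sub_X_pow_ne_zero (K := ℚ) his
  rw [pow_add] at hne ⊢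
  -- In the atoms `q^i, q^s, q^(r-i), q^(n+1-r-s-i)` the identity is polynomial once
  -- `1 - q^(i+s)` is cleared.
  generalize (X : RatFunc ℚ) ^ i = a at hne ⊢
  generalize (X : RatFunc ℚ) ^ s = b at hne ⊢
  generalize (X : RatFunc ℚ) ^ (r - i) = w
  generalize (X : RatFunc ℚ) ^ (n + 1 - (r + s + i)) = z
  generalize core (n + 1) r s i = c
  linear_combination c * a ^ 3 * b * z * (1 - w) * (1 - z) * mul_inv_cancel₀ hne

theorem lhs_recurrence (n r s : ℕ) :
    (1 - X ^ (n + 1 - (r + s))) * lhs (n + 1) r s = (1 - X ^ (n + 1)) * lhs n r s := by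
  have htel : (1 - X ^ (n + 1)) * ((1 - X ^ (n + 1 - (r + s))) * lhs (n + 1) r s
      - (1 - X ^ (n + 1)) * lhs n r s) = 0 := by
    simp only [lhs, mul_sum, ← sum_sub_distrib]
    rw [sum_congr rfl fun i hi => summand_telescope (Nat.lt_succ_iff.1 (mem_range.1 hi)),
      sum_range_sub (wzCert (n + 1) r s), wzCert_succ_self, wzCert_zero, sub_zero]
  rw [← sub_eq_zero]
  exact (mul_eq_zero.1 htel).resolve_left (one_sub_X_pow_ne_zero n.succ_ne_zero)

theorem lhs_of_lt {k r s : ℕ} (hk : k < r + s) : lhs k r s = 0 :=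
  sum_eq_zero fun i _ => by
    rw [summand, core, qbinom_of_lt (show k < r + s + i by omega), mul_zero, mul_zero]

theorem lhs_add (m r s : ℕ) :
    lhs (r + s + m) r s
      = X ^ (r * (r - 1) / 2 + (r + s) * (r + s - 1) / 2) * qfac (r + s + m)
        / (qfac m * qfac r * qfac s) := by
  have := qfac_ne_zero r
  have := qfac_ne_zero s
  induction m with
  | zero =>
    rw [lhs, sum_eq_single_of_mem 0 (mem_range.2 r.succ_pos) fun i _ hi => by
      rw [summand, core, qbinom_of_lt (show r + s + 0 < r + s + i by omega), mul_zero, mul_zero]]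
    rw [summand, weight_zero, core, exponent_zero]
    simp only [Nat.add_zero, Nat.zero_add, Nat.sub_zero, pow_zero, one_mul, mul_one, qbinom_self]
    rw [qbinom, if_pos (Nat.le_add_right r s), Nat.add_sub_cancel_left, qfac_zero]
    field_simp
  | succ m ih =>
    have hrec := lhs_recurrence (r + s + m) r s
    rw [ih, show r + s + m + 1 - (r + s) = m + 1 by omega] at hrec
    have := qfac_ne_zero m
    have hm := one_sub_X_pow_ne_zero (K := ℚ) (show m + 1 ≠ 0 by omega)
    apply mul_left_cancel₀ hm
    rw [← add_assoc, hrec, qfac_succ, qfac_succ]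
    field_simp

end LassalleSchlosser

open LassalleSchlosser

/-- The principal specialisation of the Lassalle–Schlosser formula for the
Hall–Littlewood polynomial `P_{(2^r,1^s)}(1,q,…,q^{k-1};q)`, summed by a
very-well-poised ₆φ₅ summation:
`Σ_{i=0}^{r} (−1)^i q^{i(i−1)/2+(r−i)(r−i−1)/2+(r+s+i)(r+s+i−1)/2} dᵢ
  [i+s choose s]_q [k choose r−i]_q [k choose r+s+i]_q
 = q^{r(r−1)/2+(r+s)(r+s−1)/2} (q;q)_k/((q;q)_{k−r−s}(q;q)_r(q;q)_s)`,
where `dᵢ = (1−q^{2i+s})/(1−q^{i+s})` for `i+s > 0` and `d₀ = 1` when `s = 0`. -/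
theorem lassalle_schlosser_principal_specialisation (k r s : ℕ) :
    (∑ i ∈ Finset.range (r + 1),
      (-1 : RatFunc ℚ) ^ i
        * RatFunc.X ^ (i * (i - 1) / 2 + (r - i) * (r - i - 1) / 2
            + (r + s + i) * (r + s + i - 1) / 2)
        * (if i + s = 0 then 1
            else (1 - RatFunc.X ^ (2 * i + s)) / (1 - RatFunc.X ^ (i + s)))
        * qbinom (i + s) s * qbinom k (r - i) * qbinom k (r + s + i)) =
    RatFunc.X ^ (r * (r - 1) / 2 + (r + s) * (r + s - 1) / 2)
      * qfac k * qfacInv ((k : ℤ) - r - s) * qfacInv (r : ℤ) * qfacInv (s : ℤ) := by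
  trans lhs k r s
  · exact sum_congr rfl fun i _ => by simp only [summand, weight, core, exponent]; ring
  rcases lt_or_ge k (r + s) with hk | hk
  · rw [lhs_of_lt hk, qfacInv_of_neg (by omega)]
    simp
  · obtain ⟨m, rfl⟩ := Nat.exists_eq_add_of_le hk
    rw [lhs_add, show ((r + s + m : ℕ) : ℤ) - r - s = m by push_cast; ring, qfacInv_natCast,
      qfacInv_natCast, qfacInv_natCast]
    ring
end
end

section
/- Let n ≥ 2 and let a, k be integers with 0 ≤ a ≤ k. Then 𝒜^{(n)}_{(k−a, 0, …, 0, a)}(z, q) = Σ_{i=0}^{a} (zq)^i · 𝒜^{(n)}_{(i, a−i, 0, …, 0, k−a)}(zq, q), where both subscripts are (n+1)-tuples (the first has k−a in position 0 and a in position n; the second has i in position 0, a−i in position 1, and k−a in position n, all other entries zero). The same identity holds for n = 1 provided the second tuple is interpreted as (i, k−i). -/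
/-!
For `λ ∈ 𝒜_{(k−a,0,…,0,a)}`, the path that climbs to height `1` in colour `c` and otherwise
stays as low as possible has weight `k − a + f₁⁽ᶜ⁾ + a` (only `k − a + f₁⁽ⁿ⁾` when `c = n`),
so the only parts `1` of `λ` are `i ≤ a` parts of colour `n`. Removing them, lowering every
other part by one and reversing the colours `c ↦ n + 1 − c` gives a partition `μ` with
`l(μ) = l(λ) − i` and `|μ| = |λ| − l(λ)`, whence the factor `(zq)^i` and the substitution
`z ↦ zq`. Reading a path backwards and raising it by one turns paths of `μ` into paths of `λ`;
with the boundary conditions `(i, a − i, 0, …, 0, k − a)` the two weights agree, except for the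
term `a − i` picked up when the path of `μ` touches `-1` in colour `1`, and that term is
recovered on the side of `λ` by lowering the last step of the reflected path to `-1`.
-/

noncomputable section

/-- The weight (sum of parts) of a coloured partition given by its multiplicity
function `f`, where `f (i, c)` is the number of parts equal to `i` of colour `c`. -/
def wt (f : ℕ × ℕ →₀ ℕ) : ℕ := f.sum fun p v => p.1 * v

/-- The length (number of parts) of a coloured partition. -/
def len (f : ℕ × ℕ →₀ ℕ) : ℕ := f.sum fun _ v => v

/-- `f` is an `n`-coloured partition: parts are at least `1` and colours lie in `{1, …, n}`. -/
def IsCP (n : ℕ) (f : ℕ × ℕ →₀ ℕ) : Prop :=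
  ∀ p ∈ f.support, 1 ≤ p.1 ∧ 1 ≤ p.2 ∧ p.2 ≤ n

/-- The extended frequencies of a CMPP (type `A`) coloured partition, with boundary
conditions `f₀⁽¹⁾ = k 0`, `f₀⁽ᶜ⁾ = 0` for `c ≠ 1` and `f₋₁⁽ᶜ⁾ = k c`. -/
def fextA (k : ℕ → ℕ) (f : ℕ × ℕ →₀ ℕ) (i : ℤ) (c : ℕ) : ℕ :=
  if i = -1 then k c else if i = 0 then (if c = 1 then k 0 else 0) else f (i.toNat, c)

/-- Membership in the CMPP set `𝒜_{k₀,…,kₙ}`: `f` is an `n`-coloured partition and for every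
path `(p 0, …, p (2n-1))` — a sequence of integers `≥ -1` with `p j ≡ j (mod 2)` and
`|p (j+1) - p j| = 1`, whose `j`-th entry is read in colour `j/2 + 1` — the total weight of
the path is at most `k₀ + ⋯ + kₙ`. -/
def MemA (n : ℕ) (k : ℕ → ℕ) (f : ℕ × ℕ →₀ ℕ) : Prop :=
  IsCP n f ∧
  ∀ p : ℕ → ℤ,
    (∀ j < 2 * n, -1 ≤ p j ∧ p j % 2 = (j : ℤ) % 2) →
    (∀ j, j + 1 < 2 * n → |p (j + 1) - p j| = 1) →
    ∑ j ∈ Finset.range (2 * n), fextA k f (p j) (j / 2 + 1) ≤ ∑ c ∈ Finset.range (n + 1), k c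

/-- The two-variable generating function `𝒜⁽ⁿ⁾_{(k₀,…,kₙ)}(z,q)`, as a power series in
the outer variable `z` whose coefficients are power series in the inner variable `q`:
the coefficient of `zˡ qᴺ` is the number of partitions in `𝒜_{k₀,…,kₙ}` with `l(λ) = l`
and `|λ| = N`. -/
def AGF (n : ℕ) (k : ℕ → ℕ) : PowerSeries (PowerSeries ℚ) :=
  PowerSeries.mk fun l => PowerSeries.mk fun N =>
    (Nat.card {f : ℕ × ℕ →₀ ℕ // MemA n k f ∧ len f = l ∧ wt f = N} : ℚ)

/-- The substitution `z ↦ z qᶜ` on a two-variable series. -/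
def zsub (c : ℕ) (F : PowerSeries (PowerSeries ℚ)) : PowerSeries (PowerSeries ℚ) :=
  PowerSeries.mk fun l =>
    (PowerSeries.X : PowerSeries ℚ) ^ (c * l) * PowerSeries.coeff l F

/-- The variable `z`. -/
def Zv : PowerSeries (PowerSeries ℚ) := PowerSeries.X

/-- The variable `q`. -/
def Qv : PowerSeries (PowerSeries ℚ) := PowerSeries.C (PowerSeries.X : PowerSeries ℚ)

namespace CMPP

/-- The colour reversal `c ↦ n + 1 - c` of `{1, …, n}`, extended by the identity so that it is an
involution of `ℕ`. -/
def colRev (n c : ℕ) : ℕ := if 1 ≤ c ∧ c ≤ n then n + 1 - c else c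

theorem colRev_involutive (n : ℕ) : Function.Involutive (colRev n) := by
  intro c; unfold colRev; split_ifs <;> omega

theorem colRev_of_mem {n c : ℕ} (h1 : 1 ≤ c) (h2 : c ≤ n) : colRev n c = n + 1 - c := by
  simp [colRev, h1, h2]

theorem colRev_mem_iff {n c : ℕ} : (1 ≤ colRev n c ∧ colRev n c ≤ n) ↔ (1 ≤ c ∧ c ≤ n) := by
  unfold colRev; split_ifs <;> omega

def shift (n : ℕ) : ℕ × ℕ ↪ ℕ × ℕ :=
  (addRightEmbedding 1).prodMap ((colRev_involutive n).toPerm _).toEmbedding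

theorem shift_apply (n v c : ℕ) : shift n (v, c) = (v + 1, colRev n c) := rfl

def up (n i : ℕ) (f : ℕ × ℕ →₀ ℕ) : ℕ × ℕ →₀ ℕ :=
  Finsupp.embDomain (shift n) f + Finsupp.single (1, n) i

/-- Forgets the parts equal to `1`, lowers the other parts by one and reverses their colours. -/
def down (n : ℕ) (f : ℕ × ℕ →₀ ℕ) : ℕ × ℕ →₀ ℕ :=
  (f.comapDomain (shift n) (shift n).injective.injOn).filter fun p => p.1 ≠ 0

theorem up_apply_zero (n i : ℕ) (f : ℕ × ℕ →₀ ℕ) (c : ℕ) : up n i f (0, c) = 0 := by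
  simp only [up, Finsupp.add_apply, Finsupp.single_apply, Prod.mk.injEq, one_ne_zero,
    false_and, if_false, add_zero]
  refine Finsupp.embDomain_of_notMem_range _ _ _ ?_
  rintro ⟨⟨v, c'⟩, h⟩
  simp [shift_apply] at h

theorem up_apply_succ (n i : ℕ) (f : ℕ × ℕ →₀ ℕ) (v c : ℕ) :
    up n i f (v + 1, c) = f (v, colRev n c) + if v = 0 ∧ c = n then i else 0 := by
  have h : Finsupp.embDomain (shift n) f (v + 1, c) = f (v, colRev n c) := by
    simpa [shift_apply, colRev_involutive n c] using
      Finsupp.embDomain_apply_self (shift n) f (v, colRev n c)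
  simp only [up, Finsupp.add_apply, Finsupp.single_apply, Prod.mk.injEq, h]
  congr 2
  apply propext; omega

theorem down_apply_zero (n : ℕ) (f : ℕ × ℕ →₀ ℕ) (c : ℕ) : down n f (0, c) = 0 := by
  simp [down]

theorem down_apply_succ (n : ℕ) (f : ℕ × ℕ →₀ ℕ) (v c : ℕ) :
    down n f (v + 1, c) = f (v + 2, colRev n c) := by
  simp [down, Finsupp.comapDomain_apply, shift_apply]

theorem _root_.IsCP.apply_eq_zero {n : ℕ} {f : ℕ × ℕ →₀ ℕ} (hf : IsCP n f) {v c : ℕ}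
    (h : v = 0 ∨ ¬(1 ≤ c ∧ c ≤ n)) : f (v, c) = 0 := by
  by_contra hne
  have := hf (v, c) (Finsupp.mem_support_iff.2 hne)
  simp only at this
  omega

theorem isCP_iff {n : ℕ} {f : ℕ × ℕ →₀ ℕ} :
    IsCP n f ↔ ∀ v c, f (v, c) ≠ 0 → 1 ≤ v ∧ 1 ≤ c ∧ c ≤ n := by
  simp [IsCP, Prod.forall]

theorem _root_.IsCP.down {n : ℕ} {f : ℕ × ℕ →₀ ℕ} (hf : IsCP n f) : IsCP n (down n f) := by
  rw [isCP_iff] at hf ⊢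
  rintro (_ | v) c h
  · simp [down_apply_zero] at h
  · rw [down_apply_succ] at h
    exact ⟨by omega, colRev_mem_iff.1 (hf _ _ h).2⟩

theorem _root_.IsCP.up {n i : ℕ} (hn : 1 ≤ n) {f : ℕ × ℕ →₀ ℕ} (hf : IsCP n f) :
    IsCP n (up n i f) := by
  rw [isCP_iff] at hf ⊢
  rintro (_ | v) c h
  · simp [up_apply_zero] at h
  · rw [up_apply_succ] at h
    by_cases hc : v = 0 ∧ c = n
    · omega
    · rw [if_neg hc, add_zero] at h
      exact ⟨by omega, colRev_mem_iff.1 (hf _ _ h).2⟩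

theorem len_up (n i : ℕ) (f : ℕ × ℕ →₀ ℕ) : len (up n i f) = len f + i := by
  rw [len, up, Finsupp.sum_add_index' (fun _ => rfl) (fun _ _ _ => rfl), Finsupp.sum_embDomain,
    Finsupp.sum_single_index rfl, len]

theorem wt_up (n i : ℕ) (f : ℕ × ℕ →₀ ℕ) : wt (up n i f) = wt f + len f + i := by
  rw [wt, up, Finsupp.sum_add_index' (fun _ => mul_zero _) (fun _ _ _ => mul_add _ _ _),
    Finsupp.sum_embDomain, Finsupp.sum_single_index (mul_zero _), one_mul, wt, len,
    ← Finsupp.sum_add]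
  congr 1
  exact Finsupp.sum_congr fun p _ => add_one_mul p.1 (f p)

theorem up_down {n : ℕ} {f : ℕ × ℕ →₀ ℕ} (hf : IsCP n f)
    (h1 : ∀ c < n, f (1, c) = 0) : up n (f (1, n)) (down n f) = f := by
  ext ⟨_ | _ | v, c⟩
  · rw [up_apply_zero, hf.apply_eq_zero (.inl rfl)]
  · rw [up_apply_succ, down_apply_zero, zero_add]
    split_ifs with hc
    · rw [hc.2]
    · rcases Nat.lt_or_ge c n with h | h
      · rw [h1 c h]
      · exact (hf.apply_eq_zero (.inr (by omega))).symm
  · rw [up_apply_succ, down_apply_succ, colRev_involutive, if_neg (by omega), add_zero]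

theorem down_up {n : ℕ} (i : ℕ) {f : ℕ × ℕ →₀ ℕ} (hf : IsCP n f) : down n (up n i f) = f := by
  ext ⟨_ | v, c⟩
  · rw [down_apply_zero, hf.apply_eq_zero (.inl rfl)]
  · rw [down_apply_succ, up_apply_succ, colRev_involutive, if_neg (by omega), add_zero]

def IsPath (n : ℕ) (p : ℕ → ℤ) : Prop :=
  (∀ j < 2 * n, -1 ≤ p j ∧ p j % 2 = (j : ℤ) % 2) ∧ ∀ j, j + 1 < 2 * n → |p (j + 1) - p j| = 1

def pathWeight (n : ℕ) (k : ℕ → ℕ) (f : ℕ × ℕ →₀ ℕ) (p : ℕ → ℤ) : ℕ :=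
  ∑ j ∈ Finset.range (2 * n), fextA k f (p j) (j / 2 + 1)

theorem memA_iff {n : ℕ} {k : ℕ → ℕ} {f : ℕ × ℕ →₀ ℕ} :
    MemA n k f ↔
      IsCP n f ∧ ∀ p, IsPath n p → pathWeight n k f p ≤ ∑ c ∈ Finset.range (n + 1), k c := by
  simp only [MemA, IsPath, pathWeight, and_imp]

def spike (s : ℕ) (j : ℕ) : ℤ := if j = s then 1 else if j % 2 = 0 then 0 else -1

theorem isPath_spike {n s : ℕ} (hs : s % 2 = 1) : IsPath n (spike s) := by
  refine ⟨fun j _ => ?_, fun j _ => ?_⟩ <;> unfold spike <;> split_ifs <;> simp <;> omega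

theorem IsPath.eq_zero_of_succ_eq_neg_one {n : ℕ} {p : ℕ → ℤ} (hp : IsPath n p) {j : ℕ}
    (hj : j + 1 < 2 * n) (h : p (j + 1) = -1) : p j = 0 := by
  have := hp.2 j hj
  have := (hp.1 j (by omega)).1
  rw [h, abs_eq (by norm_num)] at *
  omega

theorem IsPath.reflect {n : ℕ} {p : ℕ → ℤ} (hp : IsPath n p) {d : ℤ} (hd : d % 2 = 1)
    (hge : ∀ j < 2 * n, -1 ≤ p j + d) : IsPath n (fun j => p (2 * n - 1 - j) + d) := by
  refine ⟨fun j hj => ?_, fun j hj => ?_⟩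
  · have := (hp.1 (2 * n - 1 - j) (by omega)).2
    refine ⟨hge _ (by omega), ?_⟩
    push_cast [Nat.cast_sub (by omega : 1 ≤ 2 * n - j)] at this ⊢
    omega
  · have := hp.2 (2 * n - 1 - (j + 1)) (by omega)
    rw [show 2 * n - 1 - (j + 1) + 1 = 2 * n - 1 - j by omega, abs_sub_comm] at this
    simpa using this

theorem IsPath.reflect_add_one {n : ℕ} {q : ℕ → ℤ} (hq : IsPath n q) :
    IsPath n (fun j => q (2 * n - 1 - j) + 1) :=
  hq.reflect (by norm_num) fun j hj => by have := (hq.1 j hj).1; omega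

theorem IsPath.abs {n : ℕ} {p : ℕ → ℤ} (hp : IsPath n p) : IsPath n (fun j => |p j|) := by
  refine ⟨fun j hj => ?_, fun j hj => ?_⟩
  · have := hp.1 j hj
    show -1 ≤ |p j| ∧ |p j| % 2 = j % 2
    rcases abs_cases (p j) with ⟨h, _⟩ | ⟨h, _⟩ <;> rw [h] <;> omega
  · have h1 := hp.2 j hj
    have h2 := (hp.1 j (by omega)).1
    have h3 := (hp.1 (j + 1) hj).1
    show |(|p (j + 1)| - |p j|)| = 1
    rw [abs_eq (by norm_num)] at h1 ⊢
    rcases abs_cases (p j) with ⟨h, _⟩ | ⟨h, _⟩ <;>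
      rcases abs_cases (p (j + 1)) with ⟨h', _⟩ | ⟨h', _⟩ <;> rw [h, h'] <;> omega

theorem IsPath.update_last {n : ℕ} {p : ℕ → ℤ} (hp : IsPath n p) (h : p (2 * n - 2) = 0) :
    IsPath n (Function.update p (2 * n - 1) (-1)) := by
  refine ⟨fun j hj => ?_, fun j hj => ?_⟩
  · rcases eq_or_ne j (2 * n - 1) with rfl | hne
    · simp only [Function.update_self]; omega
    · rw [Function.update_of_ne hne]; exact hp.1 j hj
  · rcases eq_or_ne (j + 1) (2 * n - 1) with hlast | hne
    · rw [hlast, Function.update_self, Function.update_of_ne (by omega),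
        show j = 2 * n - 2 by omega, h]
      norm_num
    · rw [Function.update_of_ne hne, Function.update_of_ne (by omega)]
      exact hp.2 j hj

theorem pathWeight_congr {n : ℕ} {k : ℕ → ℕ} {f : ℕ × ℕ →₀ ℕ} {p p' : ℕ → ℤ}
    (h : ∀ j < 2 * n, p j = p' j) : pathWeight n k f p = pathWeight n k f p' :=
  Finset.sum_congr rfl fun j hj => by rw [h j (Finset.mem_range.1 hj)]

theorem sum_le_pathWeight {n : ℕ} (k : ℕ → ℕ) (f : ℕ × ℕ →₀ ℕ) (p : ℕ → ℤ) {S : Finset ℕ}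
    (hS : S ⊆ Finset.range (2 * n)) :
    ∑ j ∈ S, fextA k f (p j) (j / 2 + 1) ≤ pathWeight n k f p :=
  Finset.sum_le_sum_of_subset hS

theorem pathWeight_eq_sum_add_last {n : ℕ} (hn : 1 ≤ n) (k : ℕ → ℕ) (f : ℕ × ℕ →₀ ℕ)
    (p : ℕ → ℤ) :
    pathWeight n k f p =
      ∑ j ∈ Finset.range (2 * n - 1), fextA k f (p j) (j / 2 + 1) +
        fextA k f (p (2 * n - 1)) n := by
  rw [pathWeight]
  conv_lhs => rw [show 2 * n = 2 * n - 1 + 1 by omega, Finset.sum_range_succ]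
  rw [show (2 * n - 1) / 2 + 1 = n by omega]

def kL (n a k : ℕ) : ℕ → ℕ := fun j => if j = 0 then k - a else if j = n then a else 0

def kR (n a k i : ℕ) : ℕ → ℕ := fun j =>
  (if j = 0 then i else 0) + (if j = 1 then a - i else 0) + (if j = n then k - a else 0)

theorem sum_kL {n : ℕ} (hn : 1 ≤ n) (a k : ℕ) :
    ∑ c ∈ Finset.range (n + 1), kL n a k c = k - a + a := by
  have h : ∀ j, kL n a k j = (if j = 0 then k - a else 0) + (if j = n then a else 0) := by
    intro j; simp only [kL]; split_ifs <;> omega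
  simp [h, Finset.sum_add_distrib]

theorem sum_kR {n a i : ℕ} (hn : 1 ≤ n) (hi : i ≤ a) (k : ℕ) :
    ∑ c ∈ Finset.range (n + 1), kR n a k i c = k - a + a := by
  simp [kR, Finset.sum_add_distrib, show 0 < n by omega]
  omega

theorem apply_one_last_le {n a k : ℕ} (hn : 1 ≤ n) {f : ℕ × ℕ →₀ ℕ} (hf : MemA n (kL n a k) f) :
    f (1, n) ≤ a := by
  have hpath := (memA_iff.1 hf).2 _ (isPath_spike (s := 2 * n - 1) (by omega))
  have hpair := sum_le_pathWeight (n := n) (kL n a k) f (spike (2 * n - 1)) (S := {0, 2 * n - 1})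
    (by intro j; simp; omega)
  rw [Finset.sum_pair (show 0 ≠ 2 * n - 1 by omega)] at hpair
  rw [sum_kL hn] at hpath
  simp [spike, fextA, kL, show (2 * n - 1) / 2 + 1 = n by omega,
    show ¬(0 = 2 * n - 1) by omega] at hpair
  omega

theorem apply_one_eq_zero_of_lt {n a k : ℕ} (hn : 1 ≤ n) {f : ℕ × ℕ →₀ ℕ} (hf : MemA n (kL n a k) f)
    {c : ℕ} (hc : c < n) : f (1, c) = 0 := by
  rcases Nat.eq_zero_or_pos c with rfl | hc0
  · exact hf.1.apply_eq_zero (.inr (by omega))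
  have hpath := (memA_iff.1 hf).2 _ (isPath_spike (s := 2 * c - 1) (by omega))
  have htriple := sum_le_pathWeight (n := n) (kL n a k) f (spike (2 * c - 1))
    (S := {0, 2 * c - 1, 2 * n - 1}) (by intro j; simp; omega)
  rw [Finset.sum_insert (show 0 ∉ {2 * c - 1, 2 * n - 1} by simp; omega),
    Finset.sum_pair (show 2 * c - 1 ≠ 2 * n - 1 by omega)] at htriple
  rw [sum_kL hn] at hpath
  simp [spike, fextA, kL, show (2 * c - 1) / 2 + 1 = c by omega,
    show (2 * n - 1) / 2 + 1 = n by omega, show 2 * n - 1 ≠ 2 * c - 1 by omega,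
    show ¬(0 = 2 * c - 1) by omega, show (2 * n - 1) % 2 = 1 by omega, show n ≠ 0 by omega]
    at htriple
  omega

theorem up_down_of_memA_kL {n a k : ℕ} (hn : 1 ≤ n) {f : ℕ × ℕ →₀ ℕ}
    (hf : MemA n (kL n a k) f) : up n (f (1, n)) (down n f) = f :=
  up_down hf.1 fun _ hc => apply_one_eq_zero_of_lt hn hf hc

theorem fextA_one (k : ℕ → ℕ) (f : ℕ × ℕ →₀ ℕ) (c : ℕ) : fextA k f 1 c = f (1, c) := by
  simp [fextA]

theorem fextA_natCast_succ (k : ℕ → ℕ) (f : ℕ × ℕ →₀ ℕ) (v c : ℕ) :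
    fextA k f ((v + 1 : ℕ) : ℤ) c = f (v + 1, c) := by
  simp only [fextA]
  rw [if_neg (by omega), if_neg (by omega), Int.toNat_natCast]

theorem fextA_kL_neg_one_last {n : ℕ} (hn : 1 ≤ n) (a k : ℕ) (f : ℕ × ℕ →₀ ℕ) :
    fextA (kL n a k) f (-1) n = a := by
  simp [fextA, kL, show n ≠ 0 by omega]

theorem fextA_kL_neg_one {n c : ℕ} (hc0 : c ≠ 0) (hcn : c ≠ n) (a k : ℕ) (f : ℕ × ℕ →₀ ℕ) :
    fextA (kL n a k) f (-1) c = 0 := by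
  simp [fextA, kL, hc0, hcn]

theorem up_apply_one_last (n i : ℕ) {f : ℕ × ℕ →₀ ℕ} (hf : IsCP n f) : up n i f (1, n) = i := by
  rw [← zero_add 1, up_apply_succ, hf.apply_eq_zero (.inl rfl)]
  simp

theorem fextA_kR_eq {n a k i : ℕ} {μ : ℕ × ℕ →₀ ℕ} (hμ : IsCP n μ) (v : ℕ) {c : ℕ}
    (hc1 : 1 ≤ c) (hcn : c ≤ n) :
    fextA (kR n a k i) μ ((v : ℤ) - 1) c =
      fextA (kL n a k) (up n i μ) v (n + 1 - c) + if v = 0 ∧ c = 1 then a - i else 0 := by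
  rcases v with _ | _ | v
  · simp [fextA, kR, kL]
    split_ifs <;> omega
  · have := up_apply_succ n i μ 0 (n + 1 - c)
    simp [hμ.apply_eq_zero (.inl rfl)] at this
    simp [fextA, kR, this]
    split_ifs <;> omega
  · have hv : ((v + 1 + 1 : ℕ) : ℤ) - 1 = ((v + 1 : ℕ) : ℤ) := by push_cast; ring
    have hc : colRev n (n + 1 - c) = c := by rw [colRev_of_mem (by omega) (by omega)]; omega
    rw [hv, fextA_natCast_succ, fextA_natCast_succ, up_apply_succ, hc]
    simp

theorem pathWeight_kR_eq {n a k i : ℕ} (hn : 1 ≤ n) {μ : ℕ × ℕ →₀ ℕ} (hμ : IsCP n μ)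
    {q : ℕ → ℤ} (hq : IsPath n q) :
    pathWeight n (kR n a k i) μ q =
      pathWeight n (kL n a k) (up n i μ) (fun j => q (2 * n - 1 - j) + 1) +
        if q 1 = -1 then a - i else 0 := by
  have hterm : ∀ j ∈ Finset.range (2 * n), fextA (kR n a k i) μ (q j) (j / 2 + 1) =
      fextA (kL n a k) (up n i μ) (q j + 1) (n - j / 2) +
        if j = 1 ∧ q 1 = -1 then a - i else 0 := by
    intro j hj
    have hj := Finset.mem_range.1 hj
    obtain ⟨hge, hpar⟩ := hq.1 j hj
    obtain ⟨v, hv⟩ : ∃ v : ℕ, q j = v - 1 := ⟨(q j + 1).toNat, by omega⟩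
    rw [hv, fextA_kR_eq hμ v (by omega) (by omega), sub_add_cancel,
      show n + 1 - (j / 2 + 1) = n - j / 2 by omega]
    congr 2
    apply propext
    constructor
    · rintro ⟨rfl, h⟩
      obtain rfl : j = 1 := by omega
      omega
    · rintro ⟨rfl, h⟩
      omega
  rw [pathWeight, Finset.sum_congr rfl hterm, Finset.sum_add_distrib]
  simp only [ite_and]
  rw [Finset.sum_ite_eq', if_pos (Finset.mem_range.2 (by omega)), pathWeight,
    ← Finset.sum_range_reflect]
  congr 1
  refine Finset.sum_congr rfl fun j hj => ?_
  have := Finset.mem_range.1 hj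
  rw [show n - (2 * n - 1 - j) / 2 = j / 2 + 1 by omega]

theorem memA_down {n a k : ℕ} (hn : 1 ≤ n) {f : ℕ × ℕ →₀ ℕ} (hf : MemA n (kL n a k) f) :
    MemA n (kR n a k (f (1, n))) (down n f) := by
  have hi := apply_one_last_le hn hf
  have hbound := (memA_iff.1 hf).2
  rw [sum_kL hn] at hbound
  refine memA_iff.2 ⟨hf.1.down, fun q hq => ?_⟩
  rw [sum_kR hn hi, pathWeight_kR_eq hn hf.1.down hq, up_down_of_memA_kL hn hf]
  split_ifs with hq1
  · -- Lowering the last step of the reflected path to `-1` trades `f (1, n)` for `a`.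
    have hq0 : q 0 = 0 := hq.eq_zero_of_succ_eq_neg_one (by omega) hq1
    have hlast := hbound _ (hq.reflect_add_one.update_last (by
      simp [show 2 * n - 1 - (2 * n - 2) = 1 by omega, hq1]))
    rw [pathWeight_eq_sum_add_last hn] at hlast ⊢
    rw [Function.update_self, fextA_kL_neg_one_last hn,
      Finset.sum_congr rfl fun j hj => by rw [Function.update_of_ne (by simp at hj; omega)]]
      at hlast
    rw [Nat.sub_self, hq0, zero_add, fextA_one]
    omega
  · exact hbound _ hq.reflect_add_one

theorem memA_up {n a k i : ℕ} (hn : 1 ≤ n) (hi : i ≤ a) {μ : ℕ × ℕ →₀ ℕ}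
    (hμ : MemA n (kR n a k i) μ) : MemA n (kL n a k) (up n i μ) := by
  refine memA_iff.2 ⟨hμ.1.up hn, fun p hp => ?_⟩
  have hq : IsPath n (fun j => |p (2 * n - 1 - j)| - 1) :=
    hp.abs.reflect (by norm_num) fun j _ => by have := abs_nonneg (p j); omega
  have hbound := (memA_iff.1 hμ).2 _ hq
  rw [sum_kR hn hi, pathWeight_kR_eq hn hμ.1 hq, pathWeight_congr (p' := fun j => |p j|)
    fun j hj => by simp [show 2 * n - 1 - (2 * n - 1 - j) = j by omega]] at hbound
  rw [sum_kL hn]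
  refine le_trans ?_ hbound
  rw [pathWeight_eq_sum_add_last hn, pathWeight_eq_sum_add_last hn, add_assoc]
  refine add_le_add (Finset.sum_le_sum fun j hj => ?_) ?_
  · have hj := Finset.mem_range.1 hj
    obtain ⟨hge, hpar⟩ := hp.1 j (by omega)
    rcases eq_or_lt_of_le hge with hneg | hpos
    · rw [← hneg, fextA_kL_neg_one (by omega) (by omega)]
      exact Nat.zero_le _
    · rw [abs_of_nonneg (by omega)]
  · by_cases hlast : p (2 * n - 1) = -1
    · -- The reflected path then starts with `-1`, so the defect `a - i` is counted.
      have hprev : p (2 * n - 2) = 0 :=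
        hp.eq_zero_of_succ_eq_neg_one (by omega) (by rwa [show 2 * n - 2 + 1 = 2 * n - 1 by omega])
      simp only [hlast, fextA_kL_neg_one_last hn, abs_neg, abs_one, fextA_one,
        up_apply_one_last n i hμ.1, show 2 * n - 1 - 1 = 2 * n - 2 by omega, hprev]
      simp
      omega
    · rw [abs_of_nonneg (by have := (hp.1 (2 * n - 1) (by omega)).1; omega)]
      exact Nat.le_add_right _ _

theorem mul_apply_le_wt (f : ℕ × ℕ →₀ ℕ) (p : ℕ × ℕ) : p.1 * f p ≤ wt f := by
  by_cases hp : p ∈ f.support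
  · exact Finset.single_le_sum (f := fun q => q.1 * f q) (fun _ _ => Nat.zero_le _) hp
  · simp [Finsupp.notMem_support_iff.1 hp]

theorem finite_isCP_wt (n W : ℕ) : {f : ℕ × ℕ →₀ ℕ | IsCP n f ∧ wt f = W}.Finite := by
  refine ((Finset.range (W + 1) ×ˢ Finset.range (n + 1)).finsupp
    fun _ => Finset.range (W + 1)).finite_toSet.subset ?_
  rintro f ⟨hf, rfl⟩
  rw [Finset.mem_coe, Finset.mem_finsupp_iff]
  refine ⟨fun p hp => ?_, fun p _ => ?_⟩
  · have := hf p hp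
    have := mul_apply_le_wt f p
    have := Finsupp.mem_support_iff.1 hp
    simp only [Finset.mem_product, Finset.mem_range]
    exact ⟨by nlinarith [Nat.one_le_iff_ne_zero.2 this], by omega⟩
  · have := mul_apply_le_wt f p
    rw [Finset.mem_range, Nat.lt_succ_iff]
    by_cases hp : f p = 0
    · omega
    · have := (hf p (Finsupp.mem_support_iff.2 hp)).1
      nlinarith

theorem len_wt_down {n a k : ℕ} (hn : 1 ≤ n) {f : ℕ × ℕ →₀ ℕ} (hf : MemA n (kL n a k) f) :
    len (down n f) + f (1, n) = len f ∧ wt (down n f) + len f = wt f := by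
  have hlen := len_up n (f (1, n)) (down n f)
  have hwt := wt_up n (f (1, n)) (down n f)
  rw [up_down_of_memA_kL hn hf] at hlen hwt
  omega

def sliceEquiv {n : ℕ} (hn : 1 ≤ n) (a k l N : ℕ) :
    {f // MemA n (kL n a k) f ∧ len f = l ∧ wt f = N} ≃
      Σ i : Fin (a + 1), {g // MemA n (kR n a k i) g ∧ len g + i = l ∧ wt g + l = N} where
  toFun f :=
    ⟨⟨f.1 (1, n), Nat.lt_succ_of_le (apply_one_last_le hn f.2.1)⟩,
      ⟨down n f.1, memA_down hn f.2.1, (len_wt_down hn f.2.1).1.trans f.2.2.1,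
        by have := len_wt_down hn f.2.1; have := f.2.2; omega⟩⟩
  invFun g :=
    ⟨up n g.1 g.2.1, memA_up hn (Nat.le_of_lt_succ g.1.2) g.2.2.1,
      by rw [len_up]; exact g.2.2.2.1, by rw [wt_up, add_assoc, g.2.2.2.1]; exact g.2.2.2.2⟩
  left_inv f := Subtype.ext (up_down_of_memA_kL hn f.2.1)
  right_inv g := Sigma.subtype_ext (Fin.ext (up_apply_one_last n _ g.2.2.1.1))
    (down_up _ g.2.2.1.1)

theorem card_slice_kL {n : ℕ} (hn : 1 ≤ n) (a k l N : ℕ) :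
    Nat.card {f // MemA n (kL n a k) f ∧ len f = l ∧ wt f = N} =
      ∑ i ∈ Finset.range (a + 1),
        Nat.card {g // MemA n (kR n a k i) g ∧ len g + i = l ∧ wt g + l = N} := by
  have (i : Fin (a + 1)) :
      Finite {g // MemA n (kR n a k i) g ∧ len g + i = l ∧ wt g + l = N} :=
    ((finite_isCP_wt n (N - l)).subset fun g hg => ⟨hg.1.1, by have := hg.2.2; omega⟩).to_subtype
  rw [Nat.card_congr (sliceEquiv hn a k l N), Nat.card_sigma]
  exact Fin.sum_univ_eq_sum_range
    (fun i => Nat.card {g // MemA n (kR n a k i) g ∧ len g + i = l ∧ wt g + l = N}) _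

theorem card_slice_shift (P : (ℕ × ℕ →₀ ℕ) → Prop) (i l N : ℕ) :
    Nat.card {g // P g ∧ len g + i = l ∧ wt g + l = N} =
      if i ≤ l ∧ l ≤ N then Nat.card {g // P g ∧ len g = l - i ∧ wt g = N - l} else 0 := by
  split_ifs with h
  · exact Nat.card_congr (Equiv.subtypeEquivRight fun g => and_congr_right fun _ => by omega)
  · exact @Nat.card_of_isEmpty _ ⟨fun g => h (by have := g.2.2; omega)⟩

theorem coeff_AGF (n : ℕ) (k : ℕ → ℕ) (l N : ℕ) :
    PowerSeries.coeff N (PowerSeries.coeff l (AGF n k)) =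
      Nat.card {f // MemA n k f ∧ len f = l ∧ wt f = N} := by
  simp [AGF]

theorem coeff_Zv_mul_Qv_pow_mul_zsub_one (F : PowerSeries (PowerSeries ℚ)) (i l N : ℕ) :
    PowerSeries.coeff N (PowerSeries.coeff l ((Zv * Qv) ^ i * zsub 1 F)) =
      if i ≤ l ∧ l ≤ N then PowerSeries.coeff (N - l) (PowerSeries.coeff (l - i) F) else 0 := by
  have h : (Zv * Qv) ^ i * zsub 1 F =
      PowerSeries.C (PowerSeries.X ^ i) * (zsub 1 F * PowerSeries.X ^ i) := by
    rw [Zv, Qv, mul_pow, ← map_pow]; ring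
  rw [h, PowerSeries.coeff_C_mul, PowerSeries.coeff_mul_X_pow']
  by_cases hil : i ≤ l
  · rw [if_pos hil, zsub, PowerSeries.coeff_mk, one_mul, ← mul_assoc, ← pow_add,
      Nat.add_sub_cancel' hil, mul_comm, PowerSeries.coeff_mul_X_pow']
    simp [hil]
  · simp [hil]

end CMPP

/-- The second boundary tuple is written additively, so that for `n = 1` its entries `a − i` and
`k − a` in position `1` add up. -/
theorem cmpp_functional_equation_one_general (n a k : ℕ) (hn : 1 ≤ n) :
    AGF n (fun j => if j = 0 then k - a else if j = n then a else 0) =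
      ∑ i ∈ Finset.range (a + 1), (Zv * Qv) ^ i *
        zsub 1 (AGF n (fun j =>
          (if j = 0 then i else 0) + (if j = 1 then a - i else 0) +
            (if j = n then k - a else 0))) := by
  change AGF n (CMPP.kL n a k) =
    ∑ i ∈ Finset.range (a + 1), (Zv * Qv) ^ i * zsub 1 (AGF n (CMPP.kR n a k i))
  ext l N
  simp only [map_sum, CMPP.coeff_Zv_mul_Qv_pow_mul_zsub_one, CMPP.coeff_AGF,
    CMPP.card_slice_kL hn, CMPP.card_slice_shift, Nat.cast_sum, Nat.cast_ite, Nat.cast_zero]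

/-- Equation (3.11) (first part of Proposition 3.2): for `0 ≤ a ≤ k` and `n ≥ 1`,
`𝒜⁽ⁿ⁾_{(k−a,0,…,0,a)}(z,q) = Σ_{i=0}^{a} (zq)^i 𝒜⁽ⁿ⁾_{(i,a−i,0,…,0,k−a)}(zq,q)`.
The second boundary tuple is written additively so that for `n = 1` it is the
tuple `(i, k−i)`, as required. -/
theorem cmpp_functional_equation_one (n a k : ℕ) (hn : 1 ≤ n) (hak : a ≤ k) :
    AGF n (fun j => if j = 0 then k - a else if j = n then a else 0) =
      ∑ i ∈ Finset.range (a + 1), (Zv * Qv) ^ i *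
        zsub 1 (AGF n (fun j =>
          (if j = 0 then i else 0) + (if j = 1 then a - i else 0) +
            (if j = n then k - a else 0))) :=
  cmpp_functional_equation_one_general n a k hn
end
end

section
/- Let n ≥ 1 and 0 ≤ a ≤ n be integers, set κ := 2n+3, and let λ be the partition (1^a, 0^{n−a}) (so λ_i = 1 for 1 ≤ i ≤ a and λ_i = 0 for a < i ≤ n). Then the following identity of formal power series in q holds: [(q^κ;q^κ)_∞^n / (q;q)_∞^n] · ∏_{i=1}^{n} θ(q^{λ_i+n−i+1}; q^κ) · ∏_{1≤i<j≤n} θ(q^{λ_i−λ_j−i+j}; q^κ) θ(q^{λ_i+λ_j+2n−i−j+2}; q^κ) = (q^{2a+1}; q^κ)_∞ (q^{2n−2a+2}; q^κ)_∞ (q^κ; q^κ)_∞ / (q;q)_∞. -/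
noncomputable section

/-- The product topology on power series (coefficientwise convergence). -/
instance (R : Type*) [TopologicalSpace R] : TopologicalSpace (PowerSeries R) :=
  inferInstanceAs (TopologicalSpace ((Unit →₀ ℕ) → R))

/-- `(q^a; q^b)_∞ = ∏_{i≥0} (1 - q^{a+bi})` as a power series in `q`. -/
def qPochInf (a b : ℕ) : PowerSeries ℚ :=
  ∏' i : ℕ, (1 - (PowerSeries.X : PowerSeries ℚ) ^ (a + b * i))

/-- The modified theta function `θ(q^e; q^κ) = (q^e; q^κ)_∞ (q^{κ−e}; q^κ)_∞`. -/
def theta (e κ : ℕ) : PowerSeries ℚ := qPochInf e κ * qPochInf (κ - e) κ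

/-!
Put `κ = 2n + 3` and `θ_v = θ(q^v; q^κ)` for `v ∈ ℤ/κ`, an even function of `v`. The numbers
`λᵢ + n − i + 1` are the elements of `S = {1, …, n + 1}` other than `m = n + 1 − a`, and `S`
contains exactly one of `±v` for each `v ≠ 0`. For `b ∈ S` the residues `b ± c` (`c ∈ S`, `c ≠ b`)
together with `b` and `2b` run once through `ℤ/κ ∖ {0}`, by translation by `b`. As
`∏_{v ≠ 0} θ_v = C²` with `C = ∏_{b ∈ S} θ_b = (q; q)_∞ / (q^κ; q^κ)_∞`, multiplying these
relations over `b ∈ S` and removing the terms involving `m` evaluates the square of the theta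
product on the left as `θ_{2m}² C^{2n−2}`. All series involved have constant term `1`, so the
product itself is `θ_{2m} C^{n−1}`, and `θ_{2m} = (q^{2a+1}; q^κ)_∞ (q^{2n−2a+2}; q^κ)_∞`.
-/

open PowerSeries Finset Filter

section OffDiag

variable {ι M : Type*} [CommMonoid M]

theorem Finset.prod_offDiag_eq_prod_prod_erase [DecidableEq ι] (s : Finset ι)
    (g : ι → ι → M) :
    ∏ p ∈ s.offDiag, g p.1 p.2 = ∏ b ∈ s, ∏ c ∈ s.erase b, g b c :=
  prod_finset_product' _ _ _ fun p ↦ by rw [mem_offDiag, mem_erase]; tauto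

theorem Finset.prod_offDiag_insert [DecidableEq ι] {g : ι → ι → M}
    (hg : ∀ x y, g x y = g y x) {s : Finset ι} {a : ι} (ha : a ∉ s) :
    ∏ p ∈ (insert a s).offDiag, g p.1 p.2 =
      (∏ c ∈ s, g a c) ^ 2 * ∏ p ∈ s.offDiag, g p.1 p.2 := by
  have hrow : ∀ b ∈ s,
      ∏ c ∈ (insert a s).erase b, g b c = g a b * ∏ c ∈ s.erase b, g b c := fun b hb ↦ by
      rw [erase_insert_of_ne (ne_of_mem_of_not_mem hb ha).symm,
        prod_insert fun h ↦ ha (mem_of_mem_erase h), hg]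
  rw [prod_offDiag_eq_prod_prod_erase, prod_offDiag_eq_prod_prod_erase, prod_insert ha,
    erase_insert ha, prod_congr rfl hrow, prod_mul_distrib, sq, mul_assoc]

theorem Finset.sq_prod_prod_filter_lt [LinearOrder ι] {g : ι → ι → M}
    (hg : ∀ x y, g x y = g y x) (s : Finset ι) :
    (∏ i ∈ s, ∏ j ∈ s with i < j, g i j) ^ 2 = ∏ p ∈ s.offDiag, g p.1 p.2 := by
  have hlt : ∏ i ∈ s, ∏ j ∈ s with i < j, g i j =
      ∏ p ∈ s.offDiag with p.1 < p.2, g p.1 p.2 :=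
    Eq.symm <| prod_finset_product' _ _ _ fun p ↦ by
      simp only [mem_filter, mem_offDiag]
      exact ⟨fun h ↦ ⟨h.1.1, h.1.2.1, h.2⟩,
        fun h ↦ ⟨⟨h.1, h.2.1, h.2.2.ne⟩, h.2.2⟩⟩
  have hgt : ∏ p ∈ s.offDiag with p.1 < p.2, g p.1 p.2 =
      ∏ p ∈ s.offDiag with ¬ p.1 < p.2, g p.1 p.2 := by
    refine prod_nbij' Prod.swap Prod.swap ?_ ?_ (fun _ _ ↦ rfl) (fun _ _ ↦ rfl)
      fun p _ ↦ hg _ _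
    all_goals
      intro p hp
      simp only [mem_filter, mem_offDiag, Prod.fst_swap, Prod.snd_swap] at hp ⊢
      exact ⟨⟨hp.1.2.1, hp.1.1, hp.1.2.2.symm⟩, by order⟩
  rw [sq, ← prod_filter_mul_prod_filter_not s.offDiag (fun p ↦ p.1 < p.2)]
  nth_rw 2 [hlt]
  rw [hlt, hgt]

theorem Finset.prod_offDiag_comp_of_bijOn [DecidableEq ι] {κ : Type*} [DecidableEq κ]
    {s : Finset ι} {t : Finset κ} {e : ι → κ} (he : Set.BijOn e s t) (g : κ → κ → M) :
    ∏ p ∈ s.offDiag, g (e p.1) (e p.2) = ∏ q ∈ t.offDiag, g q.1 q.2 := by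
  refine prod_nbij (Prod.map e e) ?_ ?_ ?_ fun _ _ ↦ rfl
  · intro p hp
    rw [mem_offDiag] at hp ⊢
    exact ⟨he.mapsTo hp.1, he.mapsTo hp.2.1, fun h ↦ hp.2.2 (he.injOn hp.1 hp.2.1 h)⟩
  · intro p hp q hq h
    rw [coe_offDiag] at hp hq
    simp only [Prod.map, Prod.mk.injEq] at h
    exact Prod.ext (he.injOn hp.1 hq.1 h.1) (he.injOn hp.2.1 hq.2.1 h.2)
  · rintro ⟨x, y⟩ hq
    rw [coe_offDiag] at hq
    obtain ⟨x, hx, rfl⟩ := he.surjOn hq.1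
    obtain ⟨y, hy, rfl⟩ := he.surjOn hq.2.1
    refine ⟨(x, y), ?_, rfl⟩
    rw [coe_offDiag]
    exact ⟨hx, hy, fun h ↦ hq.2.2 (congrArg e h)⟩

end OffDiag

section HalfSystem

variable {G M : Type*} [AddCommGroup G] [CommMonoid M]

structure IsHalfSystem (S : Finset G) : Prop where
  zero_notMem : (0 : G) ∉ S
  mem_iff_neg_notMem : ∀ v ≠ 0, v ∈ S ↔ -v ∉ S

namespace IsHalfSystem

variable {S : Finset G}

theorem ne_zero (hS : IsHalfSystem S) {b : G} (hb : b ∈ S) : b ≠ 0 :=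
  ne_of_mem_of_not_mem hb hS.zero_notMem

theorem neg_notMem (hS : IsHalfSystem S) {b : G} (hb : b ∈ S) : -b ∉ S :=
  (hS.mem_iff_neg_notMem b (hS.ne_zero hb)).1 hb

theorem add_self_ne_zero (hS : IsHalfSystem S) {v : G} (hv : v ≠ 0) : v + v ≠ 0 := fun h ↦ by
  have := hS.mem_iff_neg_notMem v hv
  rw [neg_eq_of_add_eq_zero_left h] at this
  tauto

theorem eq_of_add_self_eq (hS : IsHalfSystem S) {x y : G} (h : x + x = y + y) : x = y := by
  by_contra hxy
  exact hS.add_self_ne_zero (sub_ne_zero.2 hxy) (by rw [sub_add_sub_comm, h, sub_self])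

variable [DecidableEq G]

theorem prod_add_self (hS : IsHalfSystem S) {f : G → M} (hf : ∀ v, f (-v) = f v) :
    ∏ b ∈ S, f (b + b) = ∏ b ∈ S, f b := by
  -- `b ↦ ±2b` permutes `S`, since doubling is injective and `S` meets each pair `{v, -v}` once.
  set φ : G → G := fun b ↦ if b + b ∈ S then b + b else -(b + b)
  have hφ : ∀ b ∈ S, φ b ∈ S := fun b hb ↦ by
    by_cases h : b + b ∈ S
    · simp [φ, h]
    · simpa [φ, h] using (hS.mem_iff_neg_notMem _ (hS.add_self_ne_zero (hS.ne_zero hb))).not.1 h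
  have hinj : Set.InjOn φ S := fun x hx y hy h ↦ by
    simp only [φ] at h
    split_ifs at h
    · exact hS.eq_of_add_self_eq h
    · exact absurd (hS.eq_of_add_self_eq (h.trans (neg_add _ _))) fun h' ↦
        hS.neg_notMem hy (h' ▸ hx)
    · exact absurd (hS.eq_of_add_self_eq (h.symm.trans (neg_add _ _))) fun h' ↦
        hS.neg_notMem hx (h' ▸ hy)
    · exact hS.eq_of_add_self_eq (neg_inj.1 h)
  refine prod_nbij φ hφ hinj (surjOn_of_injOn_of_card_le φ hφ hinj le_rfl) fun b _ ↦ ?_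
  by_cases h : b + b ∈ S
  · simp only [φ, if_pos h]
  · simp only [φ, if_neg h, hf]

variable [Fintype G]

theorem prod_mul_neg (hS : IsHalfSystem S) (h : G → M) :
    ∏ c ∈ S, h c * h (-c) = ∏ v ∈ univ.erase 0, h v := by
  have hdisj : Disjoint S (S.map (Equiv.neg G).toEmbedding) := by
    rw [disjoint_left]
    intro v hv hv'
    simp only [mem_map_equiv, Equiv.neg_symm, Equiv.neg_apply] at hv'
    exact hS.neg_notMem hv hv'
  have hunion : S.disjUnion _ hdisj = univ.erase 0 := by
    ext v
    simp only [disjUnion_eq_union, mem_union, mem_map_equiv, Equiv.neg_symm, Equiv.neg_apply,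
      mem_erase, mem_univ, and_true]
    by_cases hv : v = 0
    · simp [hv, hS.zero_notMem]
    · have := hS.mem_iff_neg_notMem v hv
      tauto
  rw [← hunion, prod_disjUnion, prod_map, prod_mul_distrib]
  rfl

theorem mul_mul_prod_sub_mul_add (hS : IsHalfSystem S) {b : G} (hb : b ∈ S) (f : G → M) :
    f b * f (b + b) * ∏ c ∈ S.erase b, f (b - c) * f (b + c) = ∏ v ∈ univ.erase 0, f v := by
  -- `σ c = b + c`, except that `σ (-b) = b` instead of `0`; so `σ` permutes `G` and fixes `0`.
  set σ : Equiv.Perm G := (Equiv.addLeft b).trans (Equiv.swap 0 b)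
  have hσ : ∀ c ≠ 0, c ≠ -b → σ c = b + c := fun c h0 hb' ↦
    Equiv.swap_apply_of_ne_of_ne (fun h ↦ hb' (eq_neg_of_add_eq_zero_right h)) (by simpa using h0)
  have hσb : σ (-b) = b := by simp [σ]
  have hσ0 : σ 0 = 0 := by simp [σ]
  have hb0 := hS.ne_zero hb
  rw [← σ.prod_comp _ f fun c hc ↦ mem_erase.2 ⟨fun h ↦ hc (h ▸ hσ0), mem_univ c⟩,
    ← hS.prod_mul_neg, ← mul_prod_erase S _ hb, hσb,
    hσ b hb0 fun h ↦ hS.neg_notMem hb (by rwa [← h]), mul_comm (f (b + b))]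
  refine congrArg _ (prod_congr rfl fun c hc ↦ ?_)
  obtain ⟨hcb, hcS⟩ := mem_erase.1 hc
  rw [hσ c (hS.ne_zero hcS) fun h ↦ hS.neg_notMem hb (h ▸ hcS),
    hσ (-c) (neg_ne_zero.2 (hS.ne_zero hcS)) (by rwa [Ne, neg_inj]), ← sub_eq_add_neg, mul_comm]

variable {f : G → M}

theorem prod_erase_zero_eq_sq (hS : IsHalfSystem S) (hf : ∀ v, f (-v) = f v) :
    ∏ v ∈ univ.erase 0, f v = (∏ b ∈ S, f b) ^ 2 := by
  simp_rw [← hS.prod_mul_neg, hf, ← sq, prod_pow]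

theorem sq_mul_prod_offDiag (hS : IsHalfSystem S) (hf : ∀ v, f (-v) = f v) :
    (∏ b ∈ S, f b) ^ 2 * ∏ p ∈ S.offDiag, f (p.1 - p.2) * f (p.1 + p.2) =
      (∏ b ∈ S, f b) ^ (2 * #S) := by
  calc (∏ b ∈ S, f b) ^ 2 * ∏ p ∈ S.offDiag, f (p.1 - p.2) * f (p.1 + p.2)
      = ∏ b ∈ S, f b * f (b + b) * ∏ c ∈ S.erase b, f (b - c) * f (b + c) := by
        rw [prod_offDiag_eq_prod_prod_erase S fun x y ↦ f (x - y) * f (x + y),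
          prod_mul_distrib (f := fun b ↦ f b * f (b + b)), prod_mul_distrib (f := f),
          hS.prod_add_self hf, sq]
    _ = ∏ b ∈ S, (∏ b ∈ S, f b) ^ 2 := prod_congr rfl fun b hb ↦ by
        rw [hS.mul_mul_prod_sub_mul_add hb, hS.prod_erase_zero_eq_sq hf]
    _ = (∏ b ∈ S, f b) ^ (2 * #S) := by rw [prod_const, pow_mul]

theorem sq_mul_prod_offDiag_erase (hS : IsHalfSystem S) (hf : ∀ v, f (-v) = f v) {m : G}
    (hm : m ∈ S) :
    (∏ b ∈ S.erase m, f b) ^ 2 *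
        (∏ p ∈ (S.erase m).offDiag, f (p.1 - p.2) * f (p.1 + p.2)) * (∏ b ∈ S, f b) ^ 4 =
      f (m + m) ^ 2 * (∏ b ∈ S, f b) ^ (2 * #S) := by
  set W := ∏ b ∈ S.erase m, f b
  set O := ∏ p ∈ (S.erase m).offDiag, f (p.1 - p.2) * f (p.1 + p.2)
  set R := ∏ c ∈ S.erase m, f (m - c) * f (m + c)
  have hg : ∀ x y : G, f (x - y) * f (x + y) = f (y - x) * f (y + x) := fun x y ↦ by
    rw [← neg_sub, hf, add_comm]
  have hC : ∏ b ∈ S, f b = f m * W := (mul_prod_erase S f hm).symm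
  have hoff : ∏ p ∈ S.offDiag, f (p.1 - p.2) * f (p.1 + p.2) = R ^ 2 * O := by
    conv_lhs => rw [← insert_erase hm]
    exact prod_offDiag_insert (g := fun x y ↦ f (x - y) * f (x + y)) hg (notMem_erase m S)
  have hrow : f m * f (m + m) * R = (∏ b ∈ S, f b) ^ 2 := by
    rw [hS.mul_mul_prod_sub_mul_add hm, hS.prod_erase_zero_eq_sq hf]
  calc W ^ 2 * O * (∏ b ∈ S, f b) ^ 4 = W ^ 2 * O * (f m * f (m + m) * R) ^ 2 := by
        rw [hrow, ← pow_mul]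
    _ = f (m + m) ^ 2 * ((f m * W) ^ 2 * (R ^ 2 * O)) := by
        simp only [mul_pow]
        ac_rfl
    _ = f (m + m) ^ 2 * (∏ b ∈ S, f b) ^ (2 * #S) := by
        rw [← hC, ← hoff, hS.sq_mul_prod_offDiag hf]

end IsHalfSystem

end HalfSystem

-- The topology on power series fixed above is the one scoped in `PowerSeries.WithPiTopology`;
-- these instances make Mathlib's facts about it available.
instance (R : Type*) [TopologicalSpace R] [T3Space R] : T3Space (PowerSeries R) :=
  inferInstanceAs (T3Space ((Unit →₀ ℕ) → R))

instance (R : Type*) [TopologicalSpace R] [Semiring R] [IsTopologicalSemiring R] :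
    IsTopologicalSemiring (PowerSeries R) :=
  PowerSeries.WithPiTopology.instIsTopologicalSemiring R

theorem PowerSeries.eq_of_sq_eq_sq {R : Type*} [CommRing R] [IsDomain R] [NeZero (2 : R)]
    {φ ψ : R⟦X⟧} (h : φ ^ 2 = ψ ^ 2) (hφψ : constantCoeff φ = constantCoeff ψ)
    (hψ : constantCoeff ψ ≠ 0) : φ = ψ := by
  refine (sq_eq_sq_iff_eq_or_eq_neg.1 h).resolve_right fun h' ↦ hψ ?_
  rw [h', map_neg, neg_eq_iff_add_eq_zero, ← two_mul] at hφψ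
  exact (mul_eq_zero.1 hφψ).resolve_left two_ne_zero

theorem multipliable_one_sub_X_pow_add_mul (a : ℕ) {b : ℕ} (hb : 0 < b) :
    Multipliable fun i : ℕ ↦ (1 : ℚ⟦X⟧) - X ^ (a + b * i) := by
  simp_rw [sub_eq_add_neg]
  apply WithPiTopology.multipliable_one_add_of_tendsto_order_atTop_nhds_top
  refine ENat.tendsto_nhds_top_iff_natCast_lt.mpr fun m ↦
    eventually_atTop.mpr ⟨m + 1, fun i hi ↦ ?_⟩
  rw [order_neg, order_X_pow]
  norm_cast
  nlinarith

theorem hasProd_qPochInf (a : ℕ) {b : ℕ} (hb : 0 < b) :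
    HasProd (fun i : ℕ ↦ (1 : ℚ⟦X⟧) - X ^ (a + b * i)) (qPochInf a b) :=
  (multipliable_one_sub_X_pow_add_mul a hb).hasProd

theorem constantCoeff_qPochInf {a b : ℕ} (ha : 0 < a) (hb : 0 < b) :
    constantCoeff (qPochInf a b) = 1 := by
  refine ((hasProd_qPochInf a hb).map constantCoeff
    (WithPiTopology.continuous_constantCoeff ℚ)).unique ?_
  have hpos : ∀ i, a + b * i ≠ 0 := fun i ↦ by omega
  convert hasProd_one with i
  simp [zero_pow (hpos i)]

theorem prod_qPochInf_Ico (κ : ℕ) [NeZero κ] :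
    ∏ r ∈ Ico 1 (κ + 1), qPochInf r κ = qPochInf 1 1 := by
  have h : HasProd (fun p : Fin κ × ℕ ↦ (1 : ℚ⟦X⟧) - X ^ (1 + p.1 + κ * p.2))
      (qPochInf 1 1) := by
    refine (((Nat.divModEquiv κ).trans (Equiv.prodComm _ _)).hasProd_iff
      (f := fun p : Fin κ × ℕ ↦ (1 : ℚ⟦X⟧) - X ^ (1 + p.1 + κ * p.2))).mp ?_
    convert hasProd_qPochInf 1 one_pos using 2 with k
    simp only [Function.comp_apply, Equiv.trans_apply, Nat.divModEquiv_apply,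
      Equiv.prodComm_apply, Prod.fst_swap, Prod.snd_swap, Fin.val_ofNat]
    rw [add_assoc, Nat.mod_add_div, one_mul]
  have := h.prod_fiberwise fun r ↦ hasProd_qPochInf (1 + r) (Nat.pos_of_neZero κ)
  rw [prod_Ico_eq_prod_range, Nat.add_sub_cancel,
    ← Fin.prod_univ_eq_prod_range (fun r ↦ qPochInf (1 + r) κ)]
  exact (hasProd_fintype _).unique this

theorem theta_sub {e κ : ℕ} (he : e ≤ κ) : theta (κ - e) κ = theta e κ := by
  rw [theta, theta, Nat.sub_sub_self he, mul_comm]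

theorem constantCoeff_theta {e κ : ℕ} (he : 0 < e) (heκ : e < κ) :
    constantCoeff (theta e κ) = 1 := by
  rw [theta, map_mul, constantCoeff_qPochInf he (by omega),
    constantCoeff_qPochInf (by omega) (by omega), mul_one]

theorem constantCoeff_prod_theta {ι : Type*} {s : Finset ι} {e : ι → ℕ} {κ : ℕ}
    (h : ∀ i ∈ s, 0 < e i ∧ e i < κ) : constantCoeff (∏ i ∈ s, theta (e i) κ) = 1 :=
  (map_prod _ _ _).trans <| prod_eq_one fun i hi ↦ constantCoeff_theta (h i hi).1 (h i hi).2

theorem prod_theta_mul_qPochInf {κ h : ℕ} (hκ : κ = 2 * h + 1) :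
    (∏ t ∈ Ico 1 (h + 1), theta t κ) * qPochInf κ κ = qPochInf 1 1 := by
  have : NeZero κ := ⟨by omega⟩
  have hrefl :
      ∏ t ∈ Ico 1 (h + 1), qPochInf (κ - t) κ = ∏ r ∈ Ico (h + 1) κ, qPochInf r κ := by
    rw [prod_Ico_reflect (fun r ↦ qPochInf r κ) 1 (m := h + 1) (n := κ) (by omega),
      show κ + 1 - (h + 1) = h + 1 by omega, Nat.add_sub_cancel]
  rw [← prod_qPochInf_Ico κ, prod_Ico_succ_top (by omega : 1 ≤ κ) (fun r ↦ qPochInf r κ),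
    ← prod_Ico_consecutive (fun r ↦ qPochInf r κ) (by omega : 1 ≤ h + 1)
      (by omega : h + 1 ≤ κ),
    ← hrefl, ← prod_mul_distrib]
  rfl

section ThetaMod

variable {κ : ℕ}

def thetaMod (κ : ℕ) (v : ZMod κ) : PowerSeries ℚ := theta v.val κ

theorem thetaMod_natCast {t : ℕ} (ht : t < κ) : thetaMod κ t = theta t κ := by
  rw [thetaMod, ZMod.val_cast_of_lt ht]

variable [NeZero κ]

theorem thetaMod_neg (v : ZMod κ) : thetaMod κ (-v) = thetaMod κ v := by
  by_cases hv : v = 0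
  · rw [hv, neg_zero]
  · rw [thetaMod, thetaMod, ZMod.neg_val, if_neg hv, theta_sub (ZMod.val_lt v).le]

def halfSystem (κ : ℕ) [NeZero κ] : Finset (ZMod κ) := {v | v ≠ 0 ∧ v.val ≤ κ / 2}

theorem mem_halfSystem {v : ZMod κ} : v ∈ halfSystem κ ↔ v ≠ 0 ∧ v.val ≤ κ / 2 := by
  simp [halfSystem]

theorem isHalfSystem_halfSystem (hκ : Odd κ) : IsHalfSystem (halfSystem κ) where
  zero_notMem := by simp [mem_halfSystem]
  mem_iff_neg_notMem v hv := by
    obtain ⟨h, rfl⟩ := hκ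
    have := ZMod.val_lt v
    rw [mem_halfSystem, mem_halfSystem, ZMod.neg_val, if_neg hv]
    simp only [ne_eq, hv, not_false_eq_true, true_and, neg_eq_zero]
    omega

theorem natCast_mem_halfSystem {t : ℕ} (h0 : 0 < t) (ht : t ≤ κ / 2) :
    (t : ZMod κ) ∈ halfSystem κ := by
  have := NeZero.pos κ
  rw [mem_halfSystem, ← ZMod.val_pos, ZMod.val_cast_of_lt (by omega)]
  exact ⟨h0, ht⟩

theorem bijOn_val_halfSystem :
    Set.BijOn ZMod.val (halfSystem κ : Set (ZMod κ)) (Ico 1 (κ / 2 + 1)) := by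
  refine ⟨fun v hv ↦ ?_, (ZMod.val_injective κ).injOn, fun t ht ↦ ?_⟩
  · rw [mem_coe, mem_halfSystem, ← ZMod.val_pos] at hv
    rw [mem_coe, mem_Ico]
    omega
  · rw [mem_coe, mem_Ico] at ht
    have := NeZero.pos κ
    exact ⟨t, natCast_mem_halfSystem (by omega) (by omega), ZMod.val_cast_of_lt (by omega)⟩

theorem card_halfSystem : #(halfSystem κ) = κ / 2 := by
  have h := bijOn_val_halfSystem (κ := κ)
  rw [card_nbij _ h.mapsTo h.injOn h.surjOn, Nat.card_Ico, Nat.add_sub_cancel]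

theorem prod_halfSystem_thetaMod :
    ∏ v ∈ halfSystem κ, thetaMod κ v = ∏ t ∈ Ico 1 (κ / 2 + 1), theta t κ :=
  have h := bijOn_val_halfSystem (κ := κ)
  prod_nbij _ (fun _ hv ↦ h.mapsTo hv) h.injOn h.surjOn fun _ _ ↦ rfl

end ThetaMod

section ShiftedPart

/-- `λᵢ + n − i + 1` for `λ = (1^a, 0^{n−a})`; reducible, so that it matches the exponents as
written in `level_rank_theta_product_identity`. -/
abbrev shiftedPart (n a i : ℕ) : ℕ := (if i ≤ a then 1 else 0) + n - i + 1

variable {n a : ℕ}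

theorem shiftedPart_le {i : ℕ} (hi : 1 ≤ i) : shiftedPart n a i ≤ n + 1 := by
  unfold shiftedPart
  split_ifs <;> omega

theorem shiftedPart_lt_shiftedPart {i j : ℕ} (hij : i < j) (hjn : j ≤ n) :
    shiftedPart n a j < shiftedPart n a i := by
  unfold shiftedPart
  split_ifs <;> omega

theorem bijOn_shiftedPart (ha : a ≤ n) :
    Set.BijOn (fun i ↦ (shiftedPart n a i : ZMod (2 * n + 3))) (Icc 1 n)
      ((halfSystem (2 * n + 3)).erase ((n + 1 - a : ℕ) : ZMod (2 * n + 3))) := by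
  have hcast : ∀ {x y : ℕ}, x < 2 * n + 3 → y < 2 * n + 3 →
      ((x : ZMod (2 * n + 3)) = y ↔ x = y) := fun hx hy ↦ by
    rw [ZMod.natCast_eq_natCast_iff', Nat.mod_eq_of_lt hx, Nat.mod_eq_of_lt hy]
  refine ⟨fun i hi ↦ ?_, fun i hi j hj h ↦ ?_, fun v hv ↦ ?_⟩
  · rw [mem_coe, mem_Icc] at hi
    rw [mem_coe, mem_erase, mem_halfSystem, ← ZMod.val_pos, ZMod.val_cast_of_lt, Ne, hcast]
    all_goals (try unfold shiftedPart); (try split_ifs) <;> omega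
  · rw [mem_coe, mem_Icc] at hi hj
    rw [hcast] at h
    all_goals simp only [shiftedPart] at *; split_ifs at * <;> omega
  · rw [mem_coe, mem_erase, mem_halfSystem, ← ZMod.val_pos] at hv
    have hvm : v.val ≠ n + 1 - a := fun h ↦ hv.1 (by rw [← h, ZMod.natCast_zmod_val])
    refine ⟨if n + 2 - a ≤ v.val then n + 2 - v.val else n + 1 - v.val, ?_, ?_⟩
    · rw [mem_coe, mem_Icc]
      split_ifs <;> omega
    · dsimp only
      conv_rhs => rw [← ZMod.natCast_zmod_val v]
      congr 1
      unfold shiftedPart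
      split_ifs <;> omega

theorem prod_theta_shiftedPart (ha : a ≤ n) :
    ∏ i ∈ Icc 1 n, theta (shiftedPart n a i) (2 * n + 3) =
      ∏ b ∈ (halfSystem (2 * n + 3)).erase ((n + 1 - a : ℕ) : ZMod (2 * n + 3)),
        thetaMod (2 * n + 3) b := by
  have he := bijOn_shiftedPart ha
  refine prod_nbij _ (fun i hi ↦ he.mapsTo hi) he.injOn he.surjOn fun i hi ↦ ?_
  rw [thetaMod_natCast]
  have := shiftedPart_le (n := n) (a := a) (mem_Icc.1 hi).1
  omega

theorem sq_prod_theta_sub_mul_theta_add (ha : a ≤ n) :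
    (∏ i ∈ Icc 1 n, ∏ j ∈ Icc (i + 1) n,
        theta (shiftedPart n a i - shiftedPart n a j) (2 * n + 3) *
          theta (shiftedPart n a i + shiftedPart n a j) (2 * n + 3)) ^ 2 =
      ∏ p ∈ ((halfSystem (2 * n + 3)).erase ((n + 1 - a : ℕ) : ZMod (2 * n + 3))).offDiag,
        thetaMod (2 * n + 3) (p.1 - p.2) * thetaMod (2 * n + 3) (p.1 + p.2) := by
  set g : ZMod (2 * n + 3) → ZMod (2 * n + 3) → PowerSeries ℚ :=
    fun x y ↦ thetaMod (2 * n + 3) (x - y) * thetaMod (2 * n + 3) (x + y)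
  have hg : ∀ x y, g x y = g y x := fun x y ↦ by
    simp only [g]
    rw [← neg_sub y x, thetaMod_neg, add_comm x y]
  have hpair : ∀ i ∈ Icc 1 n, ∀ j ∈ Icc (i + 1) n,
      theta (shiftedPart n a i - shiftedPart n a j) (2 * n + 3) *
        theta (shiftedPart n a i + shiftedPart n a j) (2 * n + 3) =
      g (shiftedPart n a i) (shiftedPart n a j) := fun i hi j hj ↦ by
    rw [mem_Icc] at hi hj
    have hlt := shiftedPart_lt_shiftedPart (a := a) (by omega : i < j) hj.2
    have hle := shiftedPart_le (n := n) (a := a) hi.1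
    simp only [g]
    rw [← Nat.cast_sub hlt.le, ← Nat.cast_add, thetaMod_natCast (by omega),
      thetaMod_natCast (by omega)]
  calc _ = (∏ i ∈ Icc 1 n, ∏ j ∈ Icc 1 n with i < j,
        g (shiftedPart n a i) (shiftedPart n a j)) ^ 2 := by
        congr 1
        refine prod_congr rfl fun i hi ↦ ?_
        rw [prod_congr rfl (hpair i hi)]
        congr 1
        ext j
        simp only [mem_Icc, mem_filter]
        omega
    _ = ∏ p ∈ (Icc 1 n).offDiag, g (shiftedPart n a p.1) (shiftedPart n a p.2) :=
        sq_prod_prod_filter_lt (fun i j ↦ hg _ _) _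
    _ = _ := prod_offDiag_comp_of_bijOn (bijOn_shiftedPart ha) g

theorem sq_prod_theta_shiftedPart_mul_prod_theta_pairs (hn : 1 ≤ n) (ha : a ≤ n) :
    ((∏ i ∈ Icc 1 n, theta (shiftedPart n a i) (2 * n + 3)) *
        ∏ i ∈ Icc 1 n, ∏ j ∈ Icc (i + 1) n,
          theta (shiftedPart n a i - shiftedPart n a j) (2 * n + 3) *
            theta (shiftedPart n a i + shiftedPart n a j) (2 * n + 3)) ^ 2 =
      (theta (2 * a + 1) (2 * n + 3) *
        (∏ t ∈ Ico 1 (n + 2), theta t (2 * n + 3)) ^ (n - 1)) ^ 2 := by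
  set m : ZMod (2 * n + 3) := ((n + 1 - a : ℕ) : ZMod (2 * n + 3))
  set C := ∏ t ∈ Ico 1 (n + 2), theta t (2 * n + 3)
  have hm : m ∈ halfSystem (2 * n + 3) := natCast_mem_halfSystem (by omega) (by omega)
  have h2m : thetaMod (2 * n + 3) (m + m) = theta (2 * a + 1) (2 * n + 3) := by
    rw [← Nat.cast_add, thetaMod_natCast (by omega),
      ← theta_sub (by omega : 2 * a + 1 ≤ 2 * n + 3)]
    congr 1
    omega
  have key :=
    (isHalfSystem_halfSystem ⟨n + 1, by ring⟩).sq_mul_prod_offDiag_erase thetaMod_neg hm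
  rw [← prod_theta_shiftedPart ha, ← sq_prod_theta_sub_mul_theta_add ha,
    prod_halfSystem_thetaMod, card_halfSystem, h2m, show (2 * n + 3) / 2 + 1 = n + 2 by omega,
    show (2 * n + 3) / 2 = n + 1 by omega] at key
  have hC : constantCoeff C = 1 :=
    constantCoeff_prod_theta fun t ht ↦ by rw [mem_Ico] at ht; omega
  have hC0 : C ≠ 0 := fun h ↦ by simp [h] at hC
  refine mul_right_cancel₀ (pow_ne_zero 4 hC0) ?_
  calc _ = _ := by ring
    _ = theta (2 * a + 1) (2 * n + 3) ^ 2 * C ^ (2 * (n + 1)) := key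
    _ = _ := by
      rw [mul_pow, ← pow_mul, mul_assoc, ← pow_add]
      congr 2
      omega

theorem prod_theta_shiftedPart_mul_prod_theta_pairs (hn : 1 ≤ n) (ha : a ≤ n) :
    (∏ i ∈ Icc 1 n, theta (shiftedPart n a i) (2 * n + 3)) *
        ∏ i ∈ Icc 1 n, ∏ j ∈ Icc (i + 1) n,
          theta (shiftedPart n a i - shiftedPart n a j) (2 * n + 3) *
            theta (shiftedPart n a i + shiftedPart n a j) (2 * n + 3) =
      theta (2 * a + 1) (2 * n + 3) * (∏ t ∈ Ico 1 (n + 2), theta t (2 * n + 3)) ^ (n - 1) := by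
  have hW : constantCoeff (∏ i ∈ Icc 1 n, theta (shiftedPart n a i) (2 * n + 3)) = 1 :=
    constantCoeff_prod_theta fun i hi ↦
      ⟨Nat.succ_pos _, by have := shiftedPart_le (n := n) (a := a) (mem_Icc.1 hi).1; omega⟩
  have hP : constantCoeff (∏ i ∈ Icc 1 n, ∏ j ∈ Icc (i + 1) n,
      theta (shiftedPart n a i - shiftedPart n a j) (2 * n + 3) *
        theta (shiftedPart n a i + shiftedPart n a j) (2 * n + 3)) = 1 := by
    simp only [map_prod, map_mul]
    refine prod_eq_one fun i hi ↦ prod_eq_one fun j hj ↦ ?_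
    rw [mem_Icc] at hi hj
    have hlt := shiftedPart_lt_shiftedPart (a := a) (by omega : i < j) hj.2
    have hle := shiftedPart_le (n := n) (a := a) hi.1
    rw [constantCoeff_theta (by omega) (by omega), constantCoeff_theta (by omega) (by omega),
      mul_one]
  have hC : constantCoeff (∏ t ∈ Ico 1 (n + 2), theta t (2 * n + 3)) = 1 :=
    constantCoeff_prod_theta fun t ht ↦ by rw [mem_Ico] at ht; omega
  have hT : constantCoeff (theta (2 * a + 1) (2 * n + 3)) = 1 :=
    constantCoeff_theta (by omega) (by omega)
  refine PowerSeries.eq_of_sq_eq_sq (sq_prod_theta_shiftedPart_mul_prod_theta_pairs hn ha) ?_ ?_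
  · rw [map_mul, map_mul, hW, hP, map_pow, hC, hT, one_pow, mul_one]
  · rw [map_mul, map_pow, hC, hT, one_pow, mul_one]
    exact one_ne_zero

theorem theta_mul_theta_eq_shiftedPart {i j : ℕ} (hij : i < j) (hjn : j ≤ n) (κ : ℕ) :
    theta ((if i ≤ a then 1 else 0) - (if j ≤ a then 1 else 0) + j - i) κ *
        theta ((if i ≤ a then 1 else 0) + (if j ≤ a then 1 else 0) + 2 * n - i - j + 2) κ =
      theta (shiftedPart n a i - shiftedPart n a j) κ *
        theta (shiftedPart n a i + shiftedPart n a j) κ := by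
  unfold shiftedPart
  congr 2 <;> split_ifs <;> omega

end ShiftedPart

/-- Level-rank duality at level one (equation (3.4)): for `n ≥ 1`, `0 ≤ a ≤ n`,
`κ = 2n+3` and `λ = (1^a, 0^{n−a})`,
`(q^κ;q^κ)_∞^n/(q;q)_∞^n ⬝ ∏_{i=1}^{n} θ(q^{λᵢ+n−i+1}; q^κ)
  ⬝ ∏_{1≤i<j≤n} θ(q^{λᵢ−λⱼ−i+j}; q^κ) θ(q^{λᵢ+λⱼ+2n−i−j+2}; q^κ)
 = (q^{2a+1}; q^κ)_∞ (q^{2n−2a+2}; q^κ)_∞ (q^κ; q^κ)_∞ / (q;q)_∞`. -/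
theorem level_rank_theta_product_identity (n a : ℕ) (hn : 1 ≤ n) (ha : a ≤ n) :
    (qPochInf (2 * n + 3) (2 * n + 3)) ^ n * ((qPochInf 1 1) ^ n)⁻¹ *
      (∏ i ∈ Finset.Icc 1 n,
        theta ((if i ≤ a then 1 else 0) + n - i + 1) (2 * n + 3)) *
      (∏ i ∈ Finset.Icc 1 n, ∏ j ∈ Finset.Icc (i + 1) n,
        theta ((if i ≤ a then 1 else 0) - (if j ≤ a then 1 else 0) + j - i) (2 * n + 3) *
          theta ((if i ≤ a then 1 else 0) + (if j ≤ a then 1 else 0) + 2 * n - i - j + 2)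
            (2 * n + 3)) =
    qPochInf (2 * a + 1) (2 * n + 3) * qPochInf (2 * n - 2 * a + 2) (2 * n + 3) *
      qPochInf (2 * n + 3) (2 * n + 3) * (qPochInf 1 1)⁻¹ := by
  set C := ∏ t ∈ Ico 1 (n + 2), theta t (2 * n + 3)
  set x := qPochInf (2 * n + 3) (2 * n + 3)
  have hu : C * x = qPochInf 1 1 := prod_theta_mul_qPochInf (h := n + 1) (by ring)
  have hT : qPochInf (2 * a + 1) (2 * n + 3) * qPochInf (2 * n - 2 * a + 2) (2 * n + 3) =
      theta (2 * a + 1) (2 * n + 3) := by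
    rw [theta, show 2 * n + 3 - (2 * a + 1) = 2 * n - 2 * a + 2 by omega]
  set T := theta (2 * a + 1) (2 * n + 3)
  have hkey := prod_theta_shiftedPart_mul_prod_theta_pairs hn ha
  have hcc : constantCoeff (qPochInf 1 1) ≠ 0 := by
    rw [constantCoeff_qPochInf one_pos one_pos]
    exact one_ne_zero
  have hinv := PowerSeries.mul_inv_cancel (qPochInf 1 1 ^ n) <| by
    rw [map_pow]
    exact pow_ne_zero n hcc
  rw [PowerSeries.eq_mul_inv_iff_mul_eq hcc, ← hu, prod_congr rfl fun i _ ↦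
    prod_congr rfl fun j (hj : j ∈ Icc (i + 1) n) ↦
      theta_mul_theta_eq_shiftedPart (mem_Icc.1 hj).1 (mem_Icc.1 hj).2 _]
  rw [← hu] at hinv
  linear_combination (x ^ n * ((C * x) ^ n)⁻¹ * C * x) * hkey +
    (x ^ n * ((C * x) ^ n)⁻¹ * T * x) * pow_sub_one_mul (by omega : n ≠ 0) C +
    (T * x) * hinv - x * hT
end
end
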